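/- arXiv:2605.14296 — 11 statements merged into one kernel-verified Lean document; each statement's English description precedes it below -/
import Mathlib

section
/- Let p be a positive integer and (N, I) a p-system. Let S = {s_1, s_2, ..., s_t} and T be two independent sets such that S is a base of S ∪ T (i.e., S is an inclusion-wise maximal independent subset of S ∪ T). Then there exists a partition T_1, T_2, ..., T_t of T such that |T_i| ≤ p for every i ∈ {1,...,t}, and {s_1, s_2, ..., s_{i-1}, u} ∈ I for every i ∈ {1,...,t} and every u ∈ T_i. -/
/-!
Give each `u ∈ T` the level `ℓ(u)`: the largest `k < t` such that `{s₀, …, s_{k-1}, u}` is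
independent. For `k < t`, the prefix `{s₀, …, s_{k-1}}` is then a base of itself together with
the elements of level `< k`, so the `p`-system property allows at most `p·k` of them; for `k ≥ t`
the same bound follows from `S` being a base of `S ∪ T`. By Hall's theorem, these counts let us
place every `u` into one of `p` slots in a part of index at most `ℓ(u)`.
-/

open Finset

section Hall

variable {α : Type*}

theorem exists_le_fiber_card_le (T : Finset α) (f : α → ℕ) (p : ℕ)
    (hcount : ∀ i, #{u ∈ T | f u < i} ≤ p * i) :
    ∃ g : α → ℕ, (∀ u ∈ T, g u ≤ f u) ∧ ∀ i, #{u ∈ T | g u = i} ≤ p := by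
  classical
  let slots : T → Finset (ℕ × ℕ) := fun u => range (f u + 1) ×ˢ range p
  have hall : ∀ A : Finset T, #A ≤ #(A.biUnion slots) := by
    intro A
    rcases A.eq_empty_or_nonempty with rfl | hA
    · simp
    obtain ⟨a, ha, hmax⟩ := A.exists_max_image (fun u => f u) hA
    calc #A = #(A.map (Function.Embedding.subtype _)) := (card_map _).symm
      _ ≤ #{u ∈ T | f u < f a + 1} := card_le_card fun u hu => by
          obtain ⟨v, hv, rfl⟩ := mem_map.1 hu
          exact mem_filter.2 ⟨v.2, Nat.lt_succ_of_le (hmax v hv)⟩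
      _ ≤ p * (f a + 1) := hcount _
      _ = #(slots a) := by simp [slots, mul_comm]
      _ ≤ #(A.biUnion slots) := card_le_card (subset_biUnion_of_mem slots ha)
  obtain ⟨φ, hφ_inj, hφ_mem⟩ := (all_card_le_biUnion_card_iff_exists_injective slots).1 hall
  let ψ : α → ℕ × ℕ := fun u => if hu : u ∈ T then φ ⟨u, hu⟩ else 0
  have hψ_mem : ∀ u ∈ T, (ψ u).1 ≤ f u ∧ (ψ u).2 < p := by
    intro u hu
    simpa [ψ, hu, slots, Nat.lt_succ_iff] using hφ_mem ⟨u, hu⟩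
  have hψ_inj : Set.InjOn ψ T := by
    intro u (hu : u ∈ T) v (hv : v ∈ T) huv
    simp only [ψ, dif_pos hu, dif_pos hv] at huv
    exact congrArg Subtype.val (hφ_inj huv)
  refine ⟨fun u => (ψ u).1, fun u hu => (hψ_mem u hu).1, fun i => ?_⟩
  calc #{u ∈ T | (ψ u).1 = i} ≤ #(range p) :=
        card_le_card_of_injOn (fun u => (ψ u).2)
          (fun u hu => mem_range.2 (hψ_mem u (mem_filter.1 hu).1).2)
          (fun u hu v hv huv => hψ_inj (mem_filter.1 hu).1 (mem_filter.1 hv).1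
            (Prod.ext ((mem_filter.1 hu).2.trans (mem_filter.1 hv).2.symm) huv))
    _ = p := card_range p

end Hall

namespace IndependenceSystem

variable {α : Type*} (I : Finset α → Prop)

def IsBase (X B : Finset α) : Prop :=
  B ⊆ X ∧ I B ∧ ∀ C, C ⊆ X → I C → B ⊆ C → C = B

def IsPSystem (p : ℕ) : Prop :=
  ∀ X B₁ B₂ : Finset α, IsBase I X B₁ → IsBase I X B₂ → #B₁ ≤ p * #B₂

variable {I}

theorem exists_isBase_superset {X C : Finset α} (hCX : C ⊆ X) (hC : I C) :
    ∃ B, C ⊆ B ∧ IsBase I X B := by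
  classical
  obtain ⟨B, hCB, hB⟩ :=
    exists_le_maximal {D ∈ X.powerset | I D} (mem_filter.2 ⟨mem_powerset.2 hCX, hC⟩)
  obtain ⟨hBX, hBI⟩ := mem_filter.1 hB.1
  refine ⟨B, hCB, mem_powerset.1 hBX, hBI, fun D hDX hD hBD => ?_⟩
  exact le_antisymm (hB.2 (mem_filter.2 ⟨mem_powerset.2 hDX, hD⟩) hBD) hBD

theorem isBase_union_of_not_indep_insert [DecidableEq α]
    (hdown : ∀ A B : Finset α, A ⊆ B → I B → I A)
    {B D : Finset α} (hB : I B) (hD : ∀ u ∈ D, u ∉ B → ¬ I (insert u B)) :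
    IsBase I (B ∪ D) B := by
  refine ⟨subset_union_left, hB, fun C hCX hC hBC => subset_antisymm (fun u huC => ?_) hBC⟩
  by_contra huB
  have huD : u ∈ D := (mem_union.1 (hCX huC)).resolve_left huB
  exact hD u huD huB (hdown _ C (insert_subset huC hBC) hC)

theorem card_le_mul_card_of_isBase {p : ℕ} (hpsys : IsPSystem I p)
    {X B C : Finset α} (hCX : C ⊆ X) (hC : I C) (hB : IsBase I X B) :
    #C ≤ p * #B := by
  obtain ⟨B', hCB', hB'X, hB'I, hB'max⟩ := exists_isBase_superset hCX hC
  exact (card_le_card hCB').trans (hpsys X B' B ⟨hB'X, hB'I, hB'max⟩ hB)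

end IndependenceSystem

section Level

open IndependenceSystem

variable {α : Type*} [DecidableEq α] {t : ℕ} (s : Fin t → α)

def prefixSet (k : ℕ) : Finset α := image s {j | (j : ℕ) < k}

theorem prefixSet_mono : Monotone (prefixSet s) := fun _ _ hkl =>
  image_subset_image (monotone_filter_right _ fun _ _ hj => lt_of_lt_of_le hj hkl)

theorem prefixSet_zero : prefixSet s 0 = ∅ := by simp [prefixSet]

theorem prefixSet_subset_image_univ (k : ℕ) : prefixSet s k ⊆ image s univ :=
  image_subset_image (filter_subset _ _)

theorem card_prefixSet {s : Fin t → α} (hs : Function.Injective s) {k : ℕ} (hk : k ≤ t) :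
    #(prefixSet s k) = k := by
  rw [prefixSet, card_image_of_injective _ hs, Fin.card_filter_val_lt, min_eq_right hk]

open Classical in
noncomputable def indepLevel (I : Finset α → Prop) (u : α) : ℕ :=
  Nat.findGreatest (fun k => I (insert u (prefixSet s k))) (t - 1)

variable {s} {I : Finset α → Prop}

theorem indepLevel_le (u : α) : indepLevel s I u ≤ t - 1 := by
  classical exact Nat.findGreatest_le _

theorem indep_insert_prefixSet_indepLevel {u : α} (hu : I {u}) :
    I (insert u (prefixSet s (indepLevel s I u))) := by
  classical
  exact Nat.findGreatest_spec (P := fun k => I (insert u (prefixSet s k))) (Nat.zero_le _)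
    (by simpa [prefixSet_zero] using hu)

theorem not_indep_insert_prefixSet {u : α} {k : ℕ} (hu : indepLevel s I u < k) (hk : k < t) :
    ¬ I (insert u (prefixSet s k)) := by
  classical exact Nat.findGreatest_is_greatest hu (by omega)

theorem card_filter_indepLevel_lt_le {p : ℕ}
    (hdown : ∀ A B : Finset α, A ⊆ B → I B → I A) (hpsys : IsPSystem I p)
    (hs : Function.Injective s) (hSI : I (image s univ)) {T : Finset α} (hTI : I T)
    {k : ℕ} (hk : k < t) :
    #{u ∈ T | indepLevel s I u < k} ≤ p * k := by
  have hbase : IsBase I (prefixSet s k ∪ {u ∈ T | indepLevel s I u < k}) (prefixSet s k) :=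
    isBase_union_of_not_indep_insert hdown (hdown _ _ (prefixSet_subset_image_univ s k) hSI)
      fun u hu _ => not_indep_insert_prefixSet (mem_filter.1 hu).2 hk
  calc #{u ∈ T | indepLevel s I u < k} ≤ p * #(prefixSet s k) :=
        card_le_mul_card_of_isBase hpsys subset_union_right (hdown _ _ (filter_subset _ _) hTI)
          hbase
    _ = p * k := by rw [card_prefixSet hs hk.le]

end Level

theorem statement0_general {α : Type*} [DecidableEq α] (p : ℕ)
    (I : Finset α → Prop)
    (hdown : ∀ A B : Finset α, A ⊆ B → I B → I A)
    (hpsys : ∀ X B₁ B₂ : Finset α,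
      B₁ ⊆ X → I B₁ → (∀ C, C ⊆ X → I C → B₁ ⊆ C → C = B₁) →
      B₂ ⊆ X → I B₂ → (∀ C, C ⊆ X → I C → B₂ ⊆ C → C = B₂) →
      B₁.card ≤ p * B₂.card)
    (t : ℕ) (s : Fin t → α) (hs_inj : Function.Injective s)
    (S T : Finset α) (hS : S = Finset.image s Finset.univ)
    (hSI : I S) (hTI : I T)
    (hbase : ∀ C, C ⊆ S ∪ T → I C → S ⊆ C → C = S) :
    ∃ Tpart : Fin t → Finset α,
      (∀ i, (Tpart i).card ≤ p) ∧
      (∀ i j, i ≠ j → Disjoint (Tpart i) (Tpart j)) ∧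
      Finset.univ.biUnion Tpart = T ∧
      ∀ i : Fin t, ∀ u ∈ Tpart i,
        I (insert u (Finset.image s (Finset.univ.filter (fun j : Fin t => j < i)))) := by
  subst hS
  have hpsys : IndependenceSystem.IsPSystem I p := fun X B₁ B₂ hB₁ hB₂ =>
    hpsys X B₁ B₂ hB₁.1 hB₁.2.1 hB₁.2.2 hB₂.1 hB₂.2.1 hB₂.2.2
  have hT : #T ≤ p * t := calc
    #T ≤ p * #(image s univ) :=
      IndependenceSystem.card_le_mul_card_of_isBase hpsys subset_union_right hTI
        ⟨subset_union_left, hSI, hbase⟩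
    _ = p * t := by rw [card_image_of_injective _ hs_inj, card_univ, Fintype.card_fin]
  have hcount : ∀ k, #{u ∈ T | indepLevel s I u < k} ≤ p * k := fun k =>
    (lt_or_ge k t).elim (card_filter_indepLevel_lt_le hdown hpsys hs_inj hSI hTI)
      fun hk => (card_filter_le _ _).trans (hT.trans (Nat.mul_le_mul_left p hk))
  obtain ⟨g, hg_le, hg_card⟩ := exists_le_fiber_card_le T (indepLevel s I) p hcount
  have hg_lt : ∀ u ∈ T, g u < t := fun u hu =>
    have ht : 0 < t := Nat.pos_of_mul_pos_left ((card_pos.2 ⟨u, hu⟩).trans_le hT)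
    (hg_le u hu).trans_lt ((indepLevel_le u).trans_lt (Nat.sub_one_lt_of_lt ht))
  refine ⟨fun i => {u ∈ T | g u = i}, fun i => hg_card i, fun i j hij => ?_, ?_, fun i u hu => ?_⟩
  · exact disjoint_filter.2 fun u _ hi hj => hij (Fin.ext (hi.symm.trans hj))
  · ext u
    simpa using fun hu => ⟨⟨g u, hg_lt u hu⟩, rfl⟩
  · obtain ⟨huT, hgu⟩ := mem_filter.1 hu
    have hprefix : image s {j | j < i} = prefixSet s i := rfl
    rw [hprefix, ← hgu]
    exact hdown _ _ (insert_subset_insert _ (prefixSet_mono s (hg_le u huT)))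
      (indep_insert_prefixSet_indepLevel (hdown _ _ (singleton_subset_iff.2 huT) hTI))

/-- Let `p` be a positive integer and `(N, I)` a `p`-system
(`I` nonempty and down-closed, and for every `X`, the sizes of any two
inclusion-wise maximal independent subsets of `X` are within a factor of `p`).
Let `S = {s 0, …, s (t-1)}` and `T` be independent, with `S` a base of `S ∪ T`.
Then `T` can be partitioned into `t` parts `Tpart i`, each of size at most `p`,
pairwise disjoint with union `T`, such that `{s 0, …, s (i-1)} ∪ {u} ∈ I`
for every `i` and every `u ∈ Tpart i`. -/
theorem statement0 {α : Type*} [DecidableEq α] (p : ℕ) (hp : 0 < p)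
    (I : Finset α → Prop)
    (hne : ∃ A, I A)
    (hdown : ∀ A B : Finset α, A ⊆ B → I B → I A)
    (hpsys : ∀ X B₁ B₂ : Finset α,
      B₁ ⊆ X → I B₁ → (∀ C, C ⊆ X → I C → B₁ ⊆ C → C = B₁) →
      B₂ ⊆ X → I B₂ → (∀ C, C ⊆ X → I C → B₂ ⊆ C → C = B₂) →
      B₁.card ≤ p * B₂.card)
    (t : ℕ) (s : Fin t → α) (hs_inj : Function.Injective s)
    (S T : Finset α) (hS : S = Finset.image s Finset.univ)
    (hSI : I S) (hTI : I T)
    (hbase : ∀ C, C ⊆ S ∪ T → I C → S ⊆ C → C = S) :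
    ∃ Tpart : Fin t → Finset α,
      (∀ i, (Tpart i).card ≤ p) ∧
      (∀ i j, i ≠ j → Disjoint (Tpart i) (Tpart j)) ∧
      Finset.univ.biUnion Tpart = T ∧
      ∀ i : Fin t, ∀ u ∈ Tpart i,
        I (insert u (Finset.image s (Finset.univ.filter (fun j : Fin t => j < i)))) :=
  statement0_general p I hdown hpsys t s hs_inj S T hS hSI hTI hbase
end

section
/- Let S and T be independent sets of a matroid M. Then, for every partition of S into two disjoint parts S_1 and S_2 (S = S_1 ∪ S_2, S_1 ∩ S_2 = ∅), there exists a partition of T into two disjoint parts T_1 and T_2 (T = T_1 ∪ T_2, T_1 ∩ T_2 = ∅) such that S_1 ∪ T_2 and S_2 ∪ T_1 are both independent in M. -/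
/-!
Write `C₁ = S₂` and `C₂ = S₁`. The required partition of `T` is a partition into a set independent
in `M ／ C₁` and a set independent in `M ／ C₂`, which exists as soon as
`|X| ≤ r_{M ／ C₁}(X) + r_{M ／ C₂}(X)` for every `X ⊆ T` (matroid partition). For independent `S`
and `T` this condition is submodularity:
`r(X ∪ S₁) + r(X ∪ S₂) ≥ r(X) + r(X ∪ S) ≥ |X| + |S₁| + |S₂|`.

The partition statement is proved by induction on `T`: an element `e ∈ T` can always be moved
into `C₁` or into `C₂` so that the condition survives on `T \ {e}`. If the first move fails at
`X` and the second at `Y`, submodularity at `X ∩ Y` and `insert e (X ∪ Y)` contradicts the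
condition on `T`.
-/

open Set

namespace Matroid

variable {α : Type*} {M : Matroid α} {A B C₁ C₂ I U T X Y : Set α} {e : α}

lemma eRk_add_eRk_le_of_subset_inter_of_subset_union (hI : I ⊆ A ∩ B) (hU : U ⊆ A ∪ B) :
    M.eRk I + M.eRk U ≤ M.eRk A + M.eRk B :=
  (add_le_add (M.eRk_mono hI) (M.eRk_mono hU)).trans (M.eRk_inter_add_eRk_union_le A B)

/-- The condition `|X| ≤ r_{M ／ C₁}(X) + r_{M ／ C₂}(X)` on all `X ⊆ T`, with the ranks in the
contractions written as `r_{M ／ C}(X) = r(X ∪ C) - r(C)`. -/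
def PartitionCondition (M : Matroid α) (C₁ C₂ T : Set α) : Prop :=
  ∀ X ⊆ T, X.encard + M.eRk C₁ + M.eRk C₂ ≤ M.eRk (X ∪ C₁) + M.eRk (X ∪ C₂)

lemma PartitionCondition.symm (h : M.PartitionCondition C₁ C₂ T) :
    M.PartitionCondition C₂ C₁ T := fun X hX ↦ by
  simpa only [add_right_comm _ (M.eRk C₁), add_comm (M.eRk (X ∪ C₁))] using h X hX

lemma eRk_insert_eq_add_one_and_partitionCondition [M.RankFinite]
    (h : ∀ X ⊆ T, X.encard + (M.eRk C₁ + 1) + M.eRk C₂ ≤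
      M.eRk (X ∪ insert e C₁) + M.eRk (X ∪ C₂)) :
    M.eRk (insert e C₁) = M.eRk C₁ + 1 ∧ M.PartitionCondition (insert e C₁) C₂ T := by
  have hr : M.eRk (insert e C₁) = M.eRk C₁ + 1 := by
    refine (M.eRk_insert_le_add_one e C₁).antisymm ?_
    have h₀ := h ∅ (empty_subset T)
    rw [encard_empty, zero_add, empty_union, empty_union] at h₀
    exact (ENat.add_le_add_iff_right (M.isRkFinite_set C₂).eRk_lt_top.ne).mp h₀
  exact ⟨hr, by rw [PartitionCondition, hr]; exact h⟩

lemma PartitionCondition.forall_insert_right_of_lt [M.RankFinite]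
    (h : M.PartitionCondition C₁ C₂ (insert e T)) (heT : e ∉ T) (hXT : X ⊆ T)
    (hX : M.eRk (X ∪ insert e C₁) + M.eRk (X ∪ C₂) < X.encard + (M.eRk C₁ + 1) + M.eRk C₂)
    (hYT : Y ⊆ T) :
    Y.encard + (M.eRk C₂ + 1) + M.eRk C₁ ≤ M.eRk (Y ∪ insert e C₂) + M.eRk (Y ∪ C₁) := by
  have heXY : e ∉ X ∪ Y := fun he ↦ heT (union_subset hXT hYT he)
  have hinter := h (X ∩ Y) (inter_subset_left.trans (hXT.trans (subset_insert e T)))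
  have hunion := h (insert e (X ∪ Y)) (insert_subset_insert (union_subset hXT hYT))
  have h₁ : M.eRk ((X ∩ Y) ∪ C₁) + M.eRk (insert e (X ∪ Y) ∪ C₁) ≤
      M.eRk (X ∪ insert e C₁) + M.eRk (Y ∪ C₁) :=
    eRk_add_eRk_le_of_subset_inter_of_subset_union (by tauto_set)
      (by simp only [subset_def, mem_union, mem_insert_iff]; tauto)
  have h₂ : M.eRk ((X ∩ Y) ∪ C₂) + M.eRk (insert e (X ∪ Y) ∪ C₂) ≤
      M.eRk (X ∪ C₂) + M.eRk (Y ∪ insert e C₂) :=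
    eRk_add_eRk_le_of_subset_inter_of_subset_union (by tauto_set)
      (by simp only [subset_def, mem_union, mem_insert_iff]; tauto)
  have hfin : M.eRk (X ∪ insert e C₁) + M.eRk (X ∪ C₂) + 1 ≠ ⊤ :=
    WithTop.add_ne_top.2 ⟨WithTop.add_ne_top.2 ⟨(M.isRkFinite_set _).eRk_lt_top.ne,
      (M.isRkFinite_set _).eRk_lt_top.ne⟩, ENat.one_ne_top⟩
  refine (ENat.add_le_add_iff_left hfin).mp ?_
  calc M.eRk (X ∪ insert e C₁) + M.eRk (X ∪ C₂) + 1 + (Y.encard + (M.eRk C₂ + 1) + M.eRk C₁)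
      ≤ X.encard + (M.eRk C₁ + 1) + M.eRk C₂ + (Y.encard + (M.eRk C₂ + 1) + M.eRk C₁) :=
        add_le_add (Order.add_one_le_of_lt hX) le_rfl
    _ = ((X ∪ Y).encard + (X ∩ Y).encard) + (M.eRk C₁ + M.eRk C₂) + (M.eRk C₁ + M.eRk C₂) +
          2 := by
        rw [encard_union_add_encard_inter]; ring
    _ = ((X ∩ Y).encard + M.eRk C₁ + M.eRk C₂) +
          ((insert e (X ∪ Y)).encard + M.eRk C₁ + M.eRk C₂) + 1 := by
        rw [encard_insert_of_notMem heXY]; ring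
    _ ≤ (M.eRk ((X ∩ Y) ∪ C₁) + M.eRk ((X ∩ Y) ∪ C₂)) +
          (M.eRk (insert e (X ∪ Y) ∪ C₁) + M.eRk (insert e (X ∪ Y) ∪ C₂)) + 1 :=
        add_le_add (add_le_add hinter hunion) le_rfl
    _ = (M.eRk ((X ∩ Y) ∪ C₁) + M.eRk (insert e (X ∪ Y) ∪ C₁)) +
          (M.eRk ((X ∩ Y) ∪ C₂) + M.eRk (insert e (X ∪ Y) ∪ C₂)) + 1 := by ring
    _ ≤ (M.eRk (X ∪ insert e C₁) + M.eRk (Y ∪ C₁)) +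
          (M.eRk (X ∪ C₂) + M.eRk (Y ∪ insert e C₂)) + 1 :=
        add_le_add (add_le_add h₁ h₂) le_rfl
    _ = M.eRk (X ∪ insert e C₁) + M.eRk (X ∪ C₂) + 1 +
          (M.eRk (Y ∪ insert e C₂) + M.eRk (Y ∪ C₁)) := by ring

lemma PartitionCondition.insert_left_or_insert_right [M.RankFinite]
    (h : M.PartitionCondition C₁ C₂ (insert e T)) (heT : e ∉ T) :
    (M.eRk (insert e C₁) = M.eRk C₁ + 1 ∧ M.PartitionCondition (insert e C₁) C₂ T) ∨
      (M.eRk (insert e C₂) = M.eRk C₂ + 1 ∧ M.PartitionCondition C₁ (insert e C₂) T) := by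
  by_cases hleft : ∀ X ⊆ T, X.encard + (M.eRk C₁ + 1) + M.eRk C₂ ≤
      M.eRk (X ∪ insert e C₁) + M.eRk (X ∪ C₂)
  · exact .inl (eRk_insert_eq_add_one_and_partitionCondition hleft)
  push Not at hleft
  obtain ⟨X, hXT, hX⟩ := hleft
  obtain ⟨hr, hright⟩ := eRk_insert_eq_add_one_and_partitionCondition
    fun Y hYT ↦ h.forall_insert_right_of_lt heT hXT hX hYT
  exact .inr ⟨hr, hright.symm⟩

lemma Indep.insert_of_eRk_insert_eq_add_one [M.RankFinite] (hI : M.Indep I)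
    (h : M.eRk (insert e I) = M.eRk I + 1) : M.Indep (insert e I) :=
  (M.isRkFinite_set _).indep_of_encard_le_eRk <| by
    rw [h, hI.eRk_eq_encard]
    exact encard_insert_le I e

theorem PartitionCondition.exists_partition_indep [M.RankFinite] (hT : T.Finite)
    (h : M.PartitionCondition C₁ C₂ T) (hC₁ : M.Indep C₁) (hC₂ : M.Indep C₂) :
    ∃ T₁ T₂, T = T₁ ∪ T₂ ∧ Disjoint T₁ T₂ ∧ M.Indep (C₁ ∪ T₁) ∧ M.Indep (C₂ ∪ T₂) := by
  induction T, hT using Set.Finite.induction_on generalizing C₁ C₂ with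
  | empty => exact ⟨∅, ∅, by simp, disjoint_empty ∅, by simpa, by simpa⟩
  | @insert e T heT _ ih =>
    rcases h.insert_left_or_insert_right heT with ⟨hr, h'⟩ | ⟨hr, h'⟩
    · obtain ⟨T₁, T₂, rfl, hdisj, h₁, h₂⟩ :=
        ih h' (hC₁.insert_of_eRk_insert_eq_add_one hr) hC₂
      refine ⟨insert e T₁, T₂, insert_union.symm, ?_, by rwa [union_insert, ← insert_union], h₂⟩
      exact disjoint_insert_left.2 ⟨fun he ↦ heT (mem_union_right T₁ he), hdisj⟩
    · obtain ⟨T₁, T₂, rfl, hdisj, h₁, h₂⟩ :=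
        ih h' hC₁ (hC₂.insert_of_eRk_insert_eq_add_one hr)
      refine ⟨T₁, insert e T₂, union_insert.symm, ?_, h₁, by rwa [union_insert, ← insert_union]⟩
      exact disjoint_insert_right.2 ⟨fun he ↦ heT (mem_union_left T₂ he), hdisj⟩

lemma Indep.partitionCondition {S₁ S₂ : Set α} (hS : M.Indep (S₁ ∪ S₂)) (hdisj : Disjoint S₁ S₂)
    (hT : M.Indep T) : M.PartitionCondition S₂ S₁ T := fun X hXT ↦
  calc X.encard + M.eRk S₂ + M.eRk S₁ = M.eRk X + M.eRk (S₁ ∪ S₂) := by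
        rw [(hT.subset hXT).eRk_eq_encard, hS.eRk_eq_encard, encard_union_eq hdisj,
          (hS.subset subset_union_left).eRk_eq_encard, (hS.subset subset_union_right).eRk_eq_encard]
        ring
    _ ≤ M.eRk (X ∪ S₂) + M.eRk (X ∪ S₁) :=
        eRk_add_eRk_le_of_subset_inter_of_subset_union (by tauto_set) (by tauto_set)

end Matroid

/-- Let `S` and `T` be independent sets of a (finite) matroid `M`.
Then for every partition of `S` into two disjoint parts `S₁, S₂`, there exists a
partition of `T` into two disjoint parts `T₁, T₂` such that both `S₁ ∪ T₂` and
`S₂ ∪ T₁` are independent in `M`. -/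
theorem statement1 {α : Type*} (M : Matroid α) [M.Finite]
    (S T : Set α) (hS : M.Indep S) (hT : M.Indep T)
    (S₁ S₂ : Set α) (hSparts : S = S₁ ∪ S₂) (hSdisj : Disjoint S₁ S₂) :
    ∃ T₁ T₂ : Set α, T = T₁ ∪ T₂ ∧ Disjoint T₁ T₂ ∧
      M.Indep (S₁ ∪ T₂) ∧ M.Indep (S₂ ∪ T₁) := by
  subst hSparts
  obtain ⟨T₁, T₂, hT₁₂, hdisj, h₁, h₂⟩ := (hS.partitionCondition hSdisj hT).exists_partition_indep
    hT.finite (hS.subset subset_union_right) (hS.subset subset_union_left)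
  exact ⟨T₁, T₂, hT₁₂, hdisj, h₂, h₁⟩
end

section
/- In the hardness construction with parameters k, ℓ, r and α ≥ 2, if p is a positive integer with p ≥ k + k²/(α − 1), then the pair (N, I) is a p-system: I is non-empty and down-closed, and for every X ⊆ N, the ratio between the sizes of any two inclusion-wise maximal members of I contained in X is at most p. -/
/-- The independence predicate of the hardness construction: a set `S` is
independent if it is contained in the ground set `N = ⋃_{i=1}^ℓ (A i ∪ B i)` and,
for every `1 ≤ i ≤ ℓ`, `|S ∩ (A i ∪ B i)|` is at most `0` if `|S ∩ B i'| > a^i'`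
for some `i < i' ≤ ℓ`; at most `a^i * k` if `|S ∩ B i'| ≤ a^i'` for all
`i < i' ≤ ℓ` and `S ∩ B i ≠ ∅`; and at most `a^i * k^2` otherwise. -/
def hcIndep {γ : Type*} [DecidableEq γ] (k ℓ a : ℕ) (A B : ℕ → Finset γ)
    (S : Finset γ) : Prop :=
  S ⊆ (Finset.Icc 1 ℓ).biUnion (fun i => A i ∪ B i) ∧
  ∀ i ∈ Finset.Icc 1 ℓ,
    ((∃ i' ∈ Finset.Icc 1 ℓ, i < i' ∧ a ^ i' < (S ∩ B i').card) →
        (S ∩ (A i ∪ B i)).card = 0) ∧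
    ((∀ i' ∈ Finset.Icc 1 ℓ, i < i' → (S ∩ B i').card ≤ a ^ i') → (S ∩ B i).Nonempty →
        (S ∩ (A i ∪ B i)).card ≤ a ^ i * k) ∧
    ((∀ i' ∈ Finset.Icc 1 ℓ, i < i' → (S ∩ B i').card ≤ a ^ i') → S ∩ B i = ∅ →
        (S ∩ (A i ∪ B i)).card ≤ a ^ i * k ^ 2)

open Finset

section HcAux

variable {γ : Type*} [DecidableEq γ] {k ℓ a : ℕ} {A B : ℕ → Finset γ}

/-- The empty set is independent. -/
lemma hc_empty : hcIndep k ℓ a A B (∅ : Finset γ) := by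
  refine ⟨empty_subset _, fun i hi => ⟨?_, ?_, ?_⟩⟩ <;> simp

/-- Independence is down-closed. -/
lemma hc_subset {S T : Finset γ} (hST : S ⊆ T) (hT : hcIndep k ℓ a A B T) :
    hcIndep k ℓ a A B S := by
  obtain ⟨hTsub, hTc⟩ := hT
  have mono : ∀ C : Finset γ, (S ∩ C).card ≤ (T ∩ C).card := fun C =>
    card_le_card (inter_subset_inter hST (Finset.Subset.refl C))
  refine ⟨hST.trans hTsub, fun i hi => ⟨?_, ?_, ?_⟩⟩
  · rintro ⟨i', hi', hlt, hgt⟩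
    have h0 : (T ∩ (A i ∪ B i)).card = 0 :=
      (hTc i hi).1 ⟨i', hi', hlt, lt_of_lt_of_le hgt (mono _)⟩
    have := mono (A i ∪ B i)
    omega
  · intro _ hne
    by_cases hTexc : ∃ i' ∈ Finset.Icc 1 ℓ, i < i' ∧ a ^ i' < (T ∩ B i').card
    · have h0 := (hTc i hi).1 hTexc
      have := mono (A i ∪ B i)
      omega
    · push_neg at hTexc
      have hTne : (T ∩ B i).Nonempty :=
        hne.mono (inter_subset_inter hST (Finset.Subset.refl _))
      exact le_trans (mono _) ((hTc i hi).2.1 hTexc hTne)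
  · intro _ _
    by_cases hTexc : ∃ i' ∈ Finset.Icc 1 ℓ, i < i' ∧ a ^ i' < (T ∩ B i').card
    · have h0 := (hTc i hi).1 hTexc
      have := mono (A i ∪ B i)
      omega
    · push_neg at hTexc
      by_cases hTne : (T ∩ B i).Nonempty
      · exact le_trans (mono _) (le_trans ((hTc i hi).2.1 hTexc hTne)
          (Nat.mul_le_mul_left _ (Nat.le_self_pow two_ne_zero k)))
      · exact le_trans (mono _)
          ((hTc i hi).2.2 hTexc (not_nonempty_iff_eq_empty.mp hTne))

/-- Any independent set has at most `a^i * k^2` elements at level `i`. -/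
lemma hc_level_bound {S : Finset γ} (hS : hcIndep k ℓ a A B S) {i : ℕ}
    (hi : i ∈ Finset.Icc 1 ℓ) : (S ∩ (A i ∪ B i)).card ≤ a ^ i * k ^ 2 := by
  obtain ⟨-, h⟩ := hS
  by_cases hexc : ∃ i' ∈ Finset.Icc 1 ℓ, i < i' ∧ a ^ i' < (S ∩ B i').card
  · simp [(h i hi).1 hexc]
  · push_neg at hexc
    by_cases hne : (S ∩ B i).Nonempty
    · exact le_trans ((h i hi).2.1 hexc hne)
        (Nat.mul_le_mul_left _ (Nat.le_self_pow two_ne_zero k))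
    · exact (h i hi).2.2 hexc (not_nonempty_iff_eq_empty.mp hne)

/-- Trichotomy for a blocked element at level `i` (no excess strictly above `i`). -/
lemma hc_blocked
    (hU : ∀ i ∈ Finset.Icc 1 ℓ, ∀ j ∈ Finset.Icc 1 ℓ, i ≠ j →
      Disjoint (A i ∪ B i) (A j ∪ B j))
    {T : Finset γ} (hT : hcIndep k ℓ a A B T)
    {i : ℕ} (hi : i ∈ Finset.Icc 1 ℓ)
    (hno : ∀ i' ∈ Finset.Icc 1 ℓ, i < i' → (T ∩ B i').card ≤ a ^ i')
    {x : γ} (hx : x ∈ A i ∪ B i) (hxT : x ∉ T)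
    (hnind : ¬ hcIndep k ℓ a A B (insert x T)) :
    (x ∈ B i ∧ a ^ i ≤ (T ∩ B i).card) ∨ a ^ i * k ≤ (T ∩ (A i ∪ B i)).card ∨
      a ^ i * k ^ 2 ≤ (T ∩ (A i ∪ B i)).card := by
  by_contra hgoal
  push_neg at hgoal
  obtain ⟨hg1, hg2, hg3⟩ := hgoal
  obtain ⟨hTsub, hTc⟩ := hT
  have hT'sub : insert x T ⊆ (Finset.Icc 1 ℓ).biUnion (fun j => A j ∪ B j) := by
    intro y hy
    rcases Finset.mem_insert.mp hy with rfl | hy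
    · exact Finset.mem_biUnion.mpr ⟨i, hi, hx⟩
    · exact hTsub hy
  have hcard : ∀ C : Finset γ,
      ((insert x T) ∩ C).card = (T ∩ C).card + (if x ∈ C then 1 else 0) := by
    intro C
    by_cases hC : x ∈ C
    · rw [if_pos hC, Finset.insert_inter_of_mem hC,
        Finset.card_insert_of_notMem (fun hmem => hxT (Finset.mem_of_mem_inter_left hmem))]
    · rw [if_neg hC, Finset.insert_inter_of_notMem hC, add_zero]
  have hset : ∀ C : Finset γ, x ∉ C → (insert x T) ∩ C = T ∩ C := fun C hC =>
    Finset.insert_inter_of_notMem hC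
  have hxlevel : ∀ m ∈ Finset.Icc 1 ℓ, m ≠ i → x ∉ A m ∪ B m := by
    intro m hm hmi hxm
    exact (Finset.disjoint_left.mp (hU m hm i hi hmi)) hxm hx
  apply hnind
  refine ⟨hT'sub, fun m hm => ⟨?_, ?_, ?_⟩⟩
  · rintro ⟨i', hi', hmi', hgt⟩
    by_cases hxB : x ∈ B i'
    · have hii' : i' = i := by
        by_contra h
        exact hxlevel i' hi' h (mem_union_right _ hxB)
      subst hii'
      have hlt : (T ∩ B i').card < a ^ i' := hg1 hxB
      have := hcard (B i')
      rw [if_pos hxB] at this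
      omega
    · have hTgt : a ^ i' < (T ∩ B i').card := by
        have := hcard (B i')
        rw [if_neg hxB] at this
        omega
      rcases Nat.lt_or_ge i i' with h | h
      · exact absurd hTgt (not_lt.mpr (hno i' hi' h))
      · have hmi : m ≠ i := by omega
        have hxUm : x ∉ A m ∪ B m := hxlevel m hm hmi
        have hT0 : (T ∩ (A m ∪ B m)).card = 0 := (hTc m hm).1 ⟨i', hi', hmi', hTgt⟩
        rw [hcard, if_neg hxUm, hT0]
  · intro hall' hne'
    by_cases hmi : m = i
    · subst hmi
      rw [hcard, if_pos hx]
      omega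
    · have hxUm : x ∉ A m ∪ B m := hxlevel m hm hmi
      have hxBm : x ∉ B m := fun h => hxUm (mem_union_right _ h)
      rw [hcard, if_neg hxUm, add_zero]
      have hTne : (T ∩ B m).Nonempty := by rwa [← hset (B m) hxBm]
      have hallT : ∀ i' ∈ Finset.Icc 1 ℓ, m < i' → (T ∩ B i').card ≤ a ^ i' := by
        intro i' h1 h2
        exact le_trans (card_le_card
          (inter_subset_inter (Finset.subset_insert x T) (Finset.Subset.refl _)))
          (hall' i' h1 h2)
      exact (hTc m hm).2.1 hallT hTne
  · intro hall' hemp'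
    by_cases hmi : m = i
    · subst hmi
      have hxB : x ∉ B m := by
        intro h
        have : x ∈ (insert x T) ∩ B m := mem_inter.mpr ⟨Finset.mem_insert_self x T, h⟩
        rw [hemp'] at this
        exact absurd this (notMem_empty x)
      rw [hcard, if_pos hx]
      omega
    · have hxUm : x ∉ A m ∪ B m := hxlevel m hm hmi
      rw [hcard, if_neg hxUm, add_zero]
      have hTemp : T ∩ B m = ∅ := by
        have hsub : T ∩ B m ⊆ (insert x T) ∩ B m :=
          inter_subset_inter (Finset.subset_insert x T) (Finset.Subset.refl _)
        rw [hemp'] at hsub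
        exact Finset.subset_empty.mp hsub
      have hallT : ∀ i' ∈ Finset.Icc 1 ℓ, m < i' → (T ∩ B i').card ≤ a ^ i' := by
        intro i' h1 h2
        exact le_trans (card_le_card
          (inter_subset_inter (Finset.subset_insert x T) (Finset.Subset.refl _)))
          (hall' i' h1 h2)
      exact (hTc m hm).2.2 hallT hTemp

/-- Per-level comparison: if `T` is maximal in `X` and has no excess strictly above
level `i`, then `|S ∩ (A i ∪ B i)| ≤ k * |T ∩ (A i ∪ B i)|` for any independent `S ⊆ X`. -/
lemma hc_level_ratio (hk : 1 ≤ k)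
    (hU : ∀ i ∈ Finset.Icc 1 ℓ, ∀ j ∈ Finset.Icc 1 ℓ, i ≠ j →
      Disjoint (A i ∪ B i) (A j ∪ B j))
    (hAB : ∀ i ∈ Finset.Icc 1 ℓ, ∀ j ∈ Finset.Icc 1 ℓ, Disjoint (A i) (B j))
    {X S T : Finset γ}
    (hS : hcIndep k ℓ a A B S) (hSX : S ⊆ X)
    (hT : hcIndep k ℓ a A B T) (hTX : T ⊆ X)
    (hTmax : ∀ C, C ⊆ X → hcIndep k ℓ a A B C → T ⊆ C → C = T)
    {i : ℕ} (hi : i ∈ Finset.Icc 1 ℓ)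
    (hno : ∀ i' ∈ Finset.Icc 1 ℓ, i < i' → (T ∩ B i').card ≤ a ^ i') :
    (S ∩ (A i ∪ B i)).card ≤ k * (T ∩ (A i ∪ B i)).card := by
  have hblock : ∀ x, x ∈ X → x ∈ A i ∪ B i → x ∉ T →
      (x ∈ B i ∧ a ^ i ≤ (T ∩ B i).card) ∨ a ^ i * k ≤ (T ∩ (A i ∪ B i)).card ∨
        a ^ i * k ^ 2 ≤ (T ∩ (A i ∪ B i)).card := by
    intro x hxX hxU hxT
    refine hc_blocked hU hT hi hno hxU hxT ?_
    intro hind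
    have heq := hTmax (insert x T) (Finset.insert_subset hxX hTX) hind
      (Finset.subset_insert x T)
    exact hxT (heq ▸ Finset.mem_insert_self x T)
  have hfin : a ^ i * k ≤ (T ∩ (A i ∪ B i)).card →
      (S ∩ (A i ∪ B i)).card ≤ k * (T ∩ (A i ∪ B i)).card := by
    intro h
    calc (S ∩ (A i ∪ B i)).card ≤ a ^ i * k ^ 2 := hc_level_bound ⟨hS.1, hS.2⟩ hi
      _ = k * (a ^ i * k) := by ring
      _ ≤ k * (T ∩ (A i ∪ B i)).card := Nat.mul_le_mul_left k h
  by_cases hcov : X ∩ (A i ∪ B i) ⊆ T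
  · have hsub : S ∩ (A i ∪ B i) ⊆ T ∩ (A i ∪ B i) := by
      intro y hy
      exact mem_inter.mpr ⟨hcov (mem_inter.mpr ⟨hSX (Finset.mem_of_mem_inter_left hy),
        Finset.mem_of_mem_inter_right hy⟩), Finset.mem_of_mem_inter_right hy⟩
    exact le_trans (card_le_card hsub) (Nat.le_mul_of_pos_left _ hk)
  · obtain ⟨x, hxmem, hxT⟩ := Finset.not_subset.mp hcov
    rcases hblock x (Finset.mem_of_mem_inter_left hxmem)
      (Finset.mem_of_mem_inter_right hxmem) hxT with ⟨hxB, hBge⟩ | hge | hge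
    · -- the weak case: x ∈ B i and `T` already holds `a^i` elements of `B i`
      by_cases hAcov : X ∩ A i ⊆ T
      · have hSA : S ∩ A i ⊆ T ∩ A i := by
          intro y hy
          exact mem_inter.mpr ⟨hAcov (mem_inter.mpr
            ⟨hSX (Finset.mem_of_mem_inter_left hy), Finset.mem_of_mem_inter_right hy⟩),
            Finset.mem_of_mem_inter_right hy⟩
        by_cases hSexc : ∃ i' ∈ Finset.Icc 1 ℓ, i < i' ∧ a ^ i' < (S ∩ B i').card
        · rw [(hS.2 i hi).1 hSexc]
          exact Nat.zero_le _
        · push_neg at hSexc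
          by_cases hSB : (S ∩ B i).Nonempty
          · calc (S ∩ (A i ∪ B i)).card ≤ a ^ i * k := (hS.2 i hi).2.1 hSexc hSB
              _ = k * a ^ i := Nat.mul_comm _ _
              _ ≤ k * (T ∩ B i).card := Nat.mul_le_mul_left k hBge
              _ ≤ k * (T ∩ (A i ∪ B i)).card := Nat.mul_le_mul_left k
                  (card_le_card (inter_subset_inter (Finset.Subset.refl T)
                    Finset.subset_union_right))
          · have hSBe : S ∩ B i = ∅ := not_nonempty_iff_eq_empty.mp hSB
            have heq : S ∩ (A i ∪ B i) = S ∩ A i := by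
              rw [Finset.inter_union_distrib_left, hSBe, Finset.union_empty]
            rw [heq]
            calc (S ∩ A i).card ≤ (T ∩ A i).card := card_le_card hSA
              _ ≤ (T ∩ (A i ∪ B i)).card := card_le_card
                  (inter_subset_inter (Finset.Subset.refl T) Finset.subset_union_left)
              _ ≤ k * (T ∩ (A i ∪ B i)).card := Nat.le_mul_of_pos_left _ hk
      · obtain ⟨y, hymem, hyT⟩ := Finset.not_subset.mp hAcov
        have hyA : y ∈ A i := Finset.mem_of_mem_inter_right hymem
        rcases hblock y (Finset.mem_of_mem_inter_left hymem)
          (mem_union_left _ hyA) hyT with ⟨hyB, -⟩ | hge | hge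
        · exact absurd hyB ((Finset.disjoint_left.mp (hAB i hi i hi)) hyA)
        · exact hfin hge
        · exact hfin (le_trans (Nat.mul_le_mul_left _ (Nat.le_self_pow two_ne_zero k)) hge)
    · exact hfin hge
    · exact hfin (le_trans (Nat.mul_le_mul_left _ (Nat.le_self_pow two_ne_zero k)) hge)

/-- Cardinality of a subset of the ground set splits over the levels. -/
lemma hc_card_split
    (hU : ∀ i ∈ Finset.Icc 1 ℓ, ∀ j ∈ Finset.Icc 1 ℓ, i ≠ j →
      Disjoint (A i ∪ B i) (A j ∪ B j))
    {S : Finset γ} (hSsub : S ⊆ (Finset.Icc 1 ℓ).biUnion (fun i => A i ∪ B i)) :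
    S.card = ∑ i ∈ Finset.Icc 1 ℓ, (S ∩ (A i ∪ B i)).card := by
  have heq : S = (Finset.Icc 1 ℓ).biUnion (fun i => S ∩ (A i ∪ B i)) := by
    ext y
    simp only [Finset.mem_biUnion, Finset.mem_inter]
    constructor
    · intro hy
      obtain ⟨i, hi, hyi⟩ := Finset.mem_biUnion.mp (hSsub hy)
      exact ⟨i, hi, hy, hyi⟩
    · rintro ⟨i, _, hy, -⟩
      exact hy
  conv_lhs => rw [heq]
  exact Finset.card_biUnion (fun i hi j hj hij =>
    Finset.disjoint_of_subset_left Finset.inter_subset_right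
      (Finset.disjoint_of_subset_right Finset.inter_subset_right (hU i hi j hj hij)))

/-- Geometric sum bound: `(a-1) * ∑_{i ∈ [1,e)} a^i ≤ a^e`. -/
lemma hc_geom (a : ℕ) (ha : 2 ≤ a) : ∀ e : ℕ,
    (a - 1) * ∑ i ∈ Finset.Ico 1 e, a ^ i ≤ a ^ e := by
  intro e
  induction e with
  | zero => simp
  | succ n ih =>
    by_cases hn : n = 0
    · subst hn; simp
    · have h1 : 1 ≤ n := by omega
      rw [Finset.sum_Ico_succ_top h1]
      have hone : 1 + (a - 1) = a := by omega
      calc (a - 1) * ((∑ i ∈ Finset.Ico 1 n, a ^ i) + a ^ n)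
          = (a - 1) * (∑ i ∈ Finset.Ico 1 n, a ^ i) + (a - 1) * a ^ n := by ring
        _ ≤ a ^ n + (a - 1) * a ^ n := Nat.add_le_add_right ih _
        _ = (1 + (a - 1)) * a ^ n := by ring
        _ = a * a ^ n := by rw [hone]
        _ = a ^ (n + 1) := by rw [pow_succ, Nat.mul_comm]


/-- The global ratio bound: any independent `S ⊆ X` is at most `p` times larger
than any maximal independent `T ⊆ X`. -/
lemma hc_card_ratio (hk : 1 ≤ k) (ha : 2 ≤ a)
    (hU : ∀ i ∈ Finset.Icc 1 ℓ, ∀ j ∈ Finset.Icc 1 ℓ, i ≠ j →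
      Disjoint (A i ∪ B i) (A j ∪ B j))
    (hAB : ∀ i ∈ Finset.Icc 1 ℓ, ∀ j ∈ Finset.Icc 1 ℓ, Disjoint (A i) (B j))
    {p : ℕ} (hpk : (k : ℝ) + (k : ℝ) ^ 2 / ((a : ℝ) - 1) ≤ p)
    {X S T : Finset γ}
    (hS : hcIndep k ℓ a A B S) (hSX : S ⊆ X)
    (hT : hcIndep k ℓ a A B T) (hTX : T ⊆ X)
    (hTmax : ∀ C, C ⊆ X → hcIndep k ℓ a A B C → T ⊆ C → C = T) :
    S.card ≤ p * T.card := by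
  have ha1R : (0 : ℝ) < (a : ℝ) - 1 := by
    have : (2 : ℝ) ≤ (a : ℝ) := by exact_mod_cast ha
    linarith
  have hk2nn : (0 : ℝ) ≤ (k : ℝ) ^ 2 / ((a : ℝ) - 1) := by positivity
  have hkpR : (k : ℝ) ≤ (p : ℝ) := by linarith
  have hkp : k ≤ p := by exact_mod_cast hkpR
  have hSsplit := hc_card_split hU hS.1
  have hTsplit := hc_card_split hU hT.1
  by_cases hexc : ∃ i' ∈ Finset.Icc 1 ℓ, a ^ i' < (T ∩ B i').card
  · -- there is an excess level; let `e` be the largest one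
    obtain ⟨i0, hi0, hgt0⟩ := hexc
    set Ex := (Finset.Icc 1 ℓ).filter (fun i' => a ^ i' < (T ∩ B i').card) with hExdef
    have hne : Ex.Nonempty := ⟨i0, Finset.mem_filter.mpr ⟨hi0, hgt0⟩⟩
    set e := Ex.max' hne with hedef
    have heEx : e ∈ Ex := Finset.max'_mem Ex hne
    have heIcc : e ∈ Finset.Icc 1 ℓ := (Finset.mem_filter.mp heEx).1
    have heexc : a ^ e < (T ∩ B e).card := (Finset.mem_filter.mp heEx).2
    have hebd : 1 ≤ e ∧ e ≤ ℓ := Finset.mem_Icc.mp heIcc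
    have hnoe : ∀ i ∈ Finset.Icc 1 ℓ, e ≤ i →
        ∀ i' ∈ Finset.Icc 1 ℓ, i < i' → (T ∩ B i').card ≤ a ^ i' := by
      intro i hi hei i' hi' hii'
      by_contra hgt
      push_neg at hgt
      have hmem : i' ∈ Ex := Finset.mem_filter.mpr ⟨hi', hgt⟩
      have := Finset.le_max' Ex i' hmem
      omega
    have hlev : ∀ i ∈ Finset.Icc e ℓ,
        (S ∩ (A i ∪ B i)).card ≤ k * (T ∩ (A i ∪ B i)).card := by
      intro i hi
      rw [Finset.mem_Icc] at hi
      have hi1 : i ∈ Finset.Icc 1 ℓ := Finset.mem_Icc.mpr ⟨by omega, hi.2⟩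
      exact hc_level_ratio hk hU hAB hS hSX hT hTX hTmax hi1 (hnoe i hi1 hi.1)
    have hsb : ∀ i ∈ Finset.Ico 1 e, (S ∩ (A i ∪ B i)).card ≤ a ^ i * k ^ 2 := by
      intro i hi
      rw [Finset.mem_Ico] at hi
      exact hc_level_bound hS (Finset.mem_Icc.mpr ⟨hi.1, by omega⟩)
    have hsplit : ∀ f : ℕ → ℕ,
        ∑ i ∈ Finset.Icc 1 ℓ, f i
          = ∑ i ∈ Finset.Ico 1 e, f i + ∑ i ∈ Finset.Icc e ℓ, f i := by
      intro f
      rw [← Finset.Ico_add_one_right_eq_Icc 1 ℓ, ← Finset.Ico_add_one_right_eq_Icc e ℓ]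
      exact (Finset.sum_Ico_consecutive f (by omega) (by omega)).symm
    have hSbound : S.card ≤ k ^ 2 * (∑ i ∈ Finset.Ico 1 e, a ^ i)
        + k * (∑ i ∈ Finset.Icc e ℓ, (T ∩ (A i ∪ B i)).card) := by
      rw [hSsplit, hsplit (fun i => (S ∩ (A i ∪ B i)).card)]
      refine Nat.add_le_add ?_ ?_
      · calc ∑ i ∈ Finset.Ico 1 e, (S ∩ (A i ∪ B i)).card
            ≤ ∑ i ∈ Finset.Ico 1 e, a ^ i * k ^ 2 := Finset.sum_le_sum hsb
          _ = k ^ 2 * ∑ i ∈ Finset.Ico 1 e, a ^ i := by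
              rw [Finset.mul_sum]
              exact Finset.sum_congr rfl fun i _ => Nat.mul_comm _ _
      · calc ∑ i ∈ Finset.Icc e ℓ, (S ∩ (A i ∪ B i)).card
            ≤ ∑ i ∈ Finset.Icc e ℓ, k * (T ∩ (A i ∪ B i)).card := Finset.sum_le_sum hlev
          _ = k * ∑ i ∈ Finset.Icc e ℓ, (T ∩ (A i ∪ B i)).card :=
              (Finset.mul_sum _ _ _).symm
    have hTtail : (∑ i ∈ Finset.Icc e ℓ, (T ∩ (A i ∪ B i)).card) ≤ T.card := by
      rw [hTsplit]
      exact Finset.sum_le_sum_of_subset (Finset.Icc_subset_Icc (by omega) le_rfl)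
    have hTe : a ^ e ≤ T.card :=
      le_trans (le_of_lt heexc) (Finset.card_le_card Finset.inter_subset_left)
    have hgeom := hc_geom a ha e
    have key : (S.card : ℝ) ≤ (p : ℝ) * T.card := by
      have c1 : (S.card : ℝ) ≤ (k : ℝ) ^ 2 * ((∑ i ∈ Finset.Ico 1 e, a ^ i : ℕ) : ℝ)
          + (k : ℝ) * ((∑ i ∈ Finset.Icc e ℓ, (T ∩ (A i ∪ B i)).card : ℕ) : ℝ) := by
        exact_mod_cast hSbound
      have c2 : ((a : ℝ) - 1) * ((∑ i ∈ Finset.Ico 1 e, a ^ i : ℕ) : ℝ) ≤ (a : ℝ) ^ e := by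
        have hc : ((a - 1 : ℕ) : ℝ) * ((∑ i ∈ Finset.Ico 1 e, a ^ i : ℕ) : ℝ)
            ≤ ((a ^ e : ℕ) : ℝ) := by exact_mod_cast hgeom
        rwa [Nat.cast_sub (by omega), Nat.cast_one, Nat.cast_pow] at hc
      have c3 : (a : ℝ) ^ e ≤ (T.card : ℝ) := by exact_mod_cast hTe
      have c4 : ((∑ i ∈ Finset.Icc e ℓ, (T ∩ (A i ∪ B i)).card : ℕ) : ℝ) ≤ (T.card : ℝ) := by
        exact_mod_cast hTtail
      have c5 : (k : ℝ) ^ 2 ≤ ((p : ℝ) - k) * ((a : ℝ) - 1) := by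
        have hdiv : (k : ℝ) ^ 2 / ((a : ℝ) - 1) ≤ (p : ℝ) - k := by linarith
        calc (k : ℝ) ^ 2 = (k : ℝ) ^ 2 / ((a : ℝ) - 1) * ((a : ℝ) - 1) :=
              (div_mul_cancel₀ _ (ne_of_gt ha1R)).symm
          _ ≤ ((p : ℝ) - k) * ((a : ℝ) - 1) :=
              mul_le_mul_of_nonneg_right hdiv (le_of_lt ha1R)
      have hGnn : (0 : ℝ) ≤ ((∑ i ∈ Finset.Ico 1 e, a ^ i : ℕ) : ℝ) := Nat.cast_nonneg _
      have hpk0 : (0 : ℝ) ≤ (p : ℝ) - k := by linarith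
      have d1 : (k : ℝ) ^ 2 * ((∑ i ∈ Finset.Ico 1 e, a ^ i : ℕ) : ℝ)
          ≤ ((p : ℝ) - k) * ((a : ℝ) - 1) * ((∑ i ∈ Finset.Ico 1 e, a ^ i : ℕ) : ℝ) :=
        mul_le_mul_of_nonneg_right c5 hGnn
      have d2 : ((p : ℝ) - k) * ((a : ℝ) - 1) * ((∑ i ∈ Finset.Ico 1 e, a ^ i : ℕ) : ℝ)
          ≤ ((p : ℝ) - k) * (T.card : ℝ) := by
        rw [mul_assoc]
        exact mul_le_mul_of_nonneg_left (le_trans c2 c3) hpk0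
      have d3 : (k : ℝ) * ((∑ i ∈ Finset.Icc e ℓ, (T ∩ (A i ∪ B i)).card : ℕ) : ℝ)
          ≤ (k : ℝ) * (T.card : ℝ) :=
        mul_le_mul_of_nonneg_left c4 (by positivity)
      linarith
    exact_mod_cast key
  · -- no excess level at all
    push_neg at hexc
    have hlev : ∀ i ∈ Finset.Icc 1 ℓ,
        (S ∩ (A i ∪ B i)).card ≤ k * (T ∩ (A i ∪ B i)).card := fun i hi =>
      hc_level_ratio hk hU hAB hS hSX hT hTX hTmax hi (fun i' h1 _ => hexc i' h1)
    rw [hSsplit]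
    calc ∑ i ∈ Finset.Icc 1 ℓ, (S ∩ (A i ∪ B i)).card
        ≤ ∑ i ∈ Finset.Icc 1 ℓ, k * (T ∩ (A i ∪ B i)).card := Finset.sum_le_sum hlev
      _ = k * ∑ i ∈ Finset.Icc 1 ℓ, (T ∩ (A i ∪ B i)).card := (Finset.mul_sum _ _ _).symm
      _ = k * T.card := by rw [← hTsplit]
      _ ≤ p * T.card := Nat.mul_le_mul_right _ hkp

end HcAux

/-- In the hardness construction with parameters `k, ℓ, r` and `a ≥ 2`,
if `p` is a positive integer with `p ≥ k + k² / (a − 1)`, then `(N, I)` is a `p`-system: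
`I` is nonempty and down-closed, and for every `X ⊆ N`, the sizes of any two
inclusion-wise maximal members of `I` contained in `X` are within a factor of `p`. -/
theorem statement5 {γ : Type*} [DecidableEq γ]
    (k ℓ r a : ℕ) (hk : 1 ≤ k) (hℓ : 1 ≤ ℓ) (hr : 1 ≤ r) (ha : 2 ≤ a)
    (A B : ℕ → Finset γ)
    (hAcard : ∀ i ∈ Finset.Icc 1 ℓ, (A i).card = a ^ i * k ^ 2)
    (hBcard : ∀ i ∈ Finset.Icc 1 ℓ, (B i).card = a ^ i * r * k ^ 2)
    (hAA : ∀ i ∈ Finset.Icc 1 ℓ, ∀ j ∈ Finset.Icc 1 ℓ, i ≠ j → Disjoint (A i) (A j))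
    (hBB : ∀ i ∈ Finset.Icc 1 ℓ, ∀ j ∈ Finset.Icc 1 ℓ, i ≠ j → Disjoint (B i) (B j))
    (hAB : ∀ i ∈ Finset.Icc 1 ℓ, ∀ j ∈ Finset.Icc 1 ℓ, Disjoint (A i) (B j))
    (p : ℕ) (hp : 0 < p) (hpk : (k : ℝ) + (k : ℝ) ^ 2 / ((a : ℝ) - 1) ≤ p) :
    (∃ S, hcIndep k ℓ a A B S) ∧
    (∀ S T : Finset γ, S ⊆ T → hcIndep k ℓ a A B T → hcIndep k ℓ a A B S) ∧
    (∀ X ⊆ (Finset.Icc 1 ℓ).biUnion (fun i => A i ∪ B i),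
      ∀ B₁ B₂ : Finset γ,
        B₁ ⊆ X → hcIndep k ℓ a A B B₁ →
        (∀ C, C ⊆ X → hcIndep k ℓ a A B C → B₁ ⊆ C → C = B₁) →
        B₂ ⊆ X → hcIndep k ℓ a A B B₂ →
        (∀ C, C ⊆ X → hcIndep k ℓ a A B C → B₂ ⊆ C → C = B₂) →
        B₁.card ≤ p * B₂.card) := by
  have hU : ∀ i ∈ Finset.Icc 1 ℓ, ∀ j ∈ Finset.Icc 1 ℓ, i ≠ j →
      Disjoint (A i ∪ B i) (A j ∪ B j) := by
    intro i hi j hj hij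
    rw [Finset.disjoint_union_left]
    constructor <;> rw [Finset.disjoint_union_right]
    · exact ⟨hAA i hi j hj hij, hAB i hi j hj⟩
    · exact ⟨(hAB j hj i hi).symm, hBB i hi j hj hij⟩
  refine ⟨⟨∅, hc_empty⟩, fun S T hST hT => hc_subset hST hT, ?_⟩
  intro X hX B₁ B₂ hB1X hB1 _ hB2X hB2 hB2max
  exact hc_card_ratio hk ha hU hAB hpk hB1 hB1X hB2 hB2X hB2max
end

section
/- In the hardness construction with parameters k, ℓ, r and α ≥ 2, and with the linear function f(S) = Σ_{i=1}^ℓ α^{-i}·|S ∩ (A_i ∪ B_i)|, the maximum of f(S) over all S ∈ I equals ℓ·k², and this maximum is attained by the set ∪_{i=1}^ℓ A_i, which belongs to I. -/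
/-- In the hardness construction, with the linear function
`f S = ∑_{i=1}^ℓ a^{-i} · |S ∩ (A i ∪ B i)|`, the maximum of `f` over all
independent sets equals `ℓ · k²`, attained by the set `⋃_{i=1}^ℓ A i ∈ I`. -/
theorem statement6 {γ : Type*} [DecidableEq γ]
    (k ℓ r a : ℕ) (hk : 1 ≤ k) (hℓ : 1 ≤ ℓ) (hr : 1 ≤ r) (ha : 2 ≤ a)
    (A B : ℕ → Finset γ)
    (hAcard : ∀ i ∈ Finset.Icc 1 ℓ, (A i).card = a ^ i * k ^ 2)
    (hBcard : ∀ i ∈ Finset.Icc 1 ℓ, (B i).card = a ^ i * r * k ^ 2)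
    (hAA : ∀ i ∈ Finset.Icc 1 ℓ, ∀ j ∈ Finset.Icc 1 ℓ, i ≠ j → Disjoint (A i) (A j))
    (hBB : ∀ i ∈ Finset.Icc 1 ℓ, ∀ j ∈ Finset.Icc 1 ℓ, i ≠ j → Disjoint (B i) (B j))
    (hAB : ∀ i ∈ Finset.Icc 1 ℓ, ∀ j ∈ Finset.Icc 1 ℓ, Disjoint (A i) (B j))
    (f : Finset γ → ℝ)
    (hf : ∀ S : Finset γ,
      f S = ∑ i ∈ Finset.Icc 1 ℓ, ((a : ℝ) ^ i)⁻¹ * ((S ∩ (A i ∪ B i)).card : ℝ)) :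
    hcIndep k ℓ a A B ((Finset.Icc 1 ℓ).biUnion A) ∧
    f ((Finset.Icc 1 ℓ).biUnion A) = (ℓ : ℝ) * (k : ℝ) ^ 2 ∧
    ∀ S : Finset γ, hcIndep k ℓ a A B S → f S ≤ (ℓ : ℝ) * (k : ℝ) ^ 2 := by
  classical
  have haR : (0:ℝ) < (a:ℝ) := by
    have : 0 < a := by omega
    exact_mod_cast this
  set U := (Finset.Icc 1 ℓ).biUnion A with hUdef
  have hUB : ∀ j ∈ Finset.Icc 1 ℓ, U ∩ B j = ∅ := by
    intro j hj
    ext x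
    simp only [Finset.mem_inter, Finset.mem_biUnion, Finset.notMem_empty, iff_false, not_and,
      hUdef]
    rintro ⟨i, hi, hxA⟩ hxB
    exact (Finset.disjoint_left.mp (hAB i hi j hj)) hxA hxB
  have hUA : ∀ i ∈ Finset.Icc 1 ℓ, U ∩ (A i ∪ B i) = A i := by
    intro i hi
    rw [Finset.inter_union_distrib_left, hUB i hi, Finset.union_empty]
    apply Finset.inter_eq_right.mpr
    intro x hx
    exact Finset.mem_biUnion.mpr ⟨i, hi, hx⟩
  have hindep : hcIndep k ℓ a A B U := by
    refine ⟨?_, ?_⟩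
    · intro x hx
      obtain ⟨i, hi, hxA⟩ := Finset.mem_biUnion.mp hx
      exact Finset.mem_biUnion.mpr ⟨i, hi, Finset.mem_union_left _ hxA⟩
    · intro i hi
      refine ⟨?_, ?_, ?_⟩
      · rintro ⟨i', hi', _, hlt⟩
        rw [hUB i' hi'] at hlt
        simp at hlt
      · intro _ hne
        rw [hUB i hi] at hne
        simp at hne
      · intro _ _
        rw [hUA i hi, hAcard i hi]
  refine ⟨hindep, ?_, ?_⟩
  · rw [hf]
    have : ∀ i ∈ Finset.Icc 1 ℓ,
        ((a : ℝ) ^ i)⁻¹ * ((U ∩ (A i ∪ B i)).card : ℝ) = (k:ℝ)^2 := by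
      intro i hi
      rw [hUA i hi, hAcard i hi]
      push_cast
      field_simp
    rw [Finset.sum_congr rfl this, Finset.sum_const, Nat.card_Icc]
    simp
  · intro S hS
    obtain ⟨hSsub, hScond⟩ := hS
    rw [hf]
    -- generic bound helper
    have hbound : ∀ i ∈ Finset.Icc 1 ℓ,
        (∀ i' ∈ Finset.Icc 1 ℓ, i < i' → (S ∩ B i').card ≤ a ^ i') →
        ((a : ℝ) ^ i)⁻¹ * ((S ∩ (A i ∪ B i)).card : ℝ) ≤ (k:ℝ)^2 := by
      intro i hi hhyp
      have hk2 : (S ∩ (A i ∪ B i)).card ≤ a ^ i * k ^ 2 := by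
        by_cases hE : S ∩ B i = ∅
        · exact (hScond i hi).2.2 hhyp hE
        · have := (hScond i hi).2.1 hhyp (Finset.nonempty_iff_ne_empty.mpr hE)
          calc (S ∩ (A i ∪ B i)).card ≤ a ^ i * k := this
            _ ≤ a ^ i * k ^ 2 := by nlinarith
      have hc : ((S ∩ (A i ∪ B i)).card : ℝ) ≤ (a:ℝ) ^ i * (k:ℝ) ^ 2 := by
        exact_mod_cast hk2
      have hpos : (0:ℝ) < (a:ℝ) ^ i := by positivity
      calc ((a : ℝ) ^ i)⁻¹ * ((S ∩ (A i ∪ B i)).card : ℝ)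
          ≤ ((a : ℝ) ^ i)⁻¹ * ((a:ℝ) ^ i * (k:ℝ) ^ 2) := by
            apply mul_le_mul_of_nonneg_left hc (by positivity)
        _ = (k:ℝ)^2 := by field_simp
    set T := (Finset.Icc 1 ℓ).filter (fun j => a ^ j < (S ∩ B j).card) with hTdef
    by_cases hT : T.Nonempty
    · set m := T.max' hT with hmdef
      have hmT : m ∈ T := T.max'_mem hT
      have hmIcc : m ∈ Finset.Icc 1 ℓ := (Finset.mem_filter.mp hmT).1
      have hm1 : 1 ≤ m := (Finset.mem_Icc.mp hmIcc).1
      have hmlt : a ^ m < (S ∩ B m).card := (Finset.mem_filter.mp hmT).2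
      have hhyp : ∀ i, m ≤ i → ∀ i' ∈ Finset.Icc 1 ℓ, i < i' → (S ∩ B i').card ≤ a ^ i' := by
        intro i hmi i' hi' hii'
        by_contra hcon
        push_neg at hcon
        have : i' ∈ T := Finset.mem_filter.mpr ⟨hi', hcon⟩
        have := T.le_max' i' this
        omega
      have hstep : ∀ i ∈ Finset.Icc 1 ℓ,
          ((a : ℝ) ^ i)⁻¹ * ((S ∩ (A i ∪ B i)).card : ℝ) ≤
            (if m ≤ i then (k:ℝ)^2 else 0) := by
        intro i hi
        by_cases hmi : m ≤ i
        · rw [if_pos hmi]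
          exact hbound i hi (hhyp i hmi)
        · rw [if_neg hmi]
          have h0 : (S ∩ (A i ∪ B i)).card = 0 :=
            (hScond i hi).1 ⟨m, hmIcc, by omega, hmlt⟩
          rw [h0]
          simp
      calc (∑ i ∈ Finset.Icc 1 ℓ, ((a : ℝ) ^ i)⁻¹ * ((S ∩ (A i ∪ B i)).card : ℝ))
          ≤ ∑ i ∈ Finset.Icc 1 ℓ, (if m ≤ i then (k:ℝ)^2 else 0) :=
            Finset.sum_le_sum hstep
        _ = ∑ i ∈ (Finset.Icc 1 ℓ).filter (fun i => m ≤ i), (k:ℝ)^2 :=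
            (Finset.sum_filter _ _).symm
        _ = (((Finset.Icc 1 ℓ).filter (fun i => m ≤ i)).card : ℝ) * (k:ℝ)^2 := by
            rw [Finset.sum_const, nsmul_eq_mul]
        _ ≤ (ℓ : ℝ) * (k:ℝ)^2 := by
            apply mul_le_mul_of_nonneg_right _ (by positivity)
            have : (Finset.Icc 1 ℓ).filter (fun i => m ≤ i) = Finset.Icc m ℓ := by
              ext x
              simp only [Finset.mem_filter, Finset.mem_Icc]
              omega
            rw [this, Nat.card_Icc]
            exact_mod_cast Nat.le_of_lt_succ (by omega : ℓ + 1 - m < ℓ + 1)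
    · have hhyp : ∀ i ∈ Finset.Icc 1 ℓ,
          ∀ i' ∈ Finset.Icc 1 ℓ, i < i' → (S ∩ B i').card ≤ a ^ i' := by
        intro i _ i' hi' _
        by_contra hcon
        push_neg at hcon
        exact hT ⟨i', Finset.mem_filter.mpr ⟨hi', hcon⟩⟩
      calc (∑ i ∈ Finset.Icc 1 ℓ, ((a : ℝ) ^ i)⁻¹ * ((S ∩ (A i ∪ B i)).card : ℝ))
          ≤ ∑ i ∈ Finset.Icc 1 ℓ, (k:ℝ)^2 :=
            Finset.sum_le_sum (fun i hi => hbound i hi (hhyp i hi))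
        _ = (ℓ : ℝ) * (k:ℝ)^2 := by
            rw [Finset.sum_const, Nat.card_Icc]
            simp
end

section
/- In the hardness construction with parameters k, ℓ, r and α ≥ 2, the maximum cardinality of a set S ∈ I equals Σ_{i=1}^ℓ α^i·k² = α·k²·(α^ℓ − 1)/(α − 1), and this maximum is attained by the set ∪_{i=1}^ℓ A_i, which belongs to I. -/
lemma geom_aux (x : ℝ) (ℓ : ℕ) :
    (∑ i ∈ Finset.Icc 1 ℓ, x ^ i) * (x - 1) = x * (x ^ ℓ - 1) := by
  induction ℓ with
  | zero => simp
  | succ n ih =>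
      rw [Finset.sum_Icc_succ_top (by omega)]
      ring_nf
      ring_nf at ih
      linear_combination ih

/-- In the hardness construction, the maximum cardinality of an
independent set equals `∑_{i=1}^ℓ a^i · k² = a·k²·(a^ℓ − 1)/(a − 1)`, attained by
the set `⋃_{i=1}^ℓ A i ∈ I`. -/
theorem statement7 {γ : Type*} [DecidableEq γ]
    (k ℓ r a : ℕ) (hk : 1 ≤ k) (hℓ : 1 ≤ ℓ) (hr : 1 ≤ r) (ha : 2 ≤ a)
    (A B : ℕ → Finset γ)
    (hAcard : ∀ i ∈ Finset.Icc 1 ℓ, (A i).card = a ^ i * k ^ 2)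
    (hBcard : ∀ i ∈ Finset.Icc 1 ℓ, (B i).card = a ^ i * r * k ^ 2)
    (hAA : ∀ i ∈ Finset.Icc 1 ℓ, ∀ j ∈ Finset.Icc 1 ℓ, i ≠ j → Disjoint (A i) (A j))
    (hBB : ∀ i ∈ Finset.Icc 1 ℓ, ∀ j ∈ Finset.Icc 1 ℓ, i ≠ j → Disjoint (B i) (B j))
    (hAB : ∀ i ∈ Finset.Icc 1 ℓ, ∀ j ∈ Finset.Icc 1 ℓ, Disjoint (A i) (B j)) :
    hcIndep k ℓ a A B ((Finset.Icc 1 ℓ).biUnion A) ∧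
    ((Finset.Icc 1 ℓ).biUnion A).card = ∑ i ∈ Finset.Icc 1 ℓ, a ^ i * k ^ 2 ∧
    (∀ S : Finset γ, hcIndep k ℓ a A B S →
      S.card ≤ ∑ i ∈ Finset.Icc 1 ℓ, a ^ i * k ^ 2) ∧
    ((∑ i ∈ Finset.Icc 1 ℓ, a ^ i * k ^ 2 : ℕ) : ℝ) =
      (a : ℝ) * (k : ℝ) ^ 2 * ((a : ℝ) ^ ℓ - 1) / ((a : ℝ) - 1) := by
  set T := (Finset.Icc 1 ℓ).biUnion A with hT
  -- T ∩ B i' = ∅ for all i' in range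
  have hTB : ∀ i' ∈ Finset.Icc 1 ℓ, T ∩ B i' = ∅ := by
    intro i' hi'
    rw [Finset.eq_empty_iff_forall_notMem]
    intro x hx
    simp only [Finset.mem_inter, hT, Finset.mem_biUnion] at hx
    obtain ⟨⟨j, hj, hxj⟩, hxb⟩ := hx
    exact Finset.disjoint_left.mp (hAB j hj i' hi') hxj hxb
  refine ⟨⟨?_, ?_⟩, ?_, ?_, ?_⟩
  · intro x hx
    simp only [hT, Finset.mem_biUnion] at hx ⊢
    obtain ⟨j, hj, hxj⟩ := hx
    exact ⟨j, hj, Finset.mem_union_left _ hxj⟩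
  · intro i hi
    have hempty : T ∩ B i = ∅ := hTB i hi
    have hsub : T ∩ (A i ∪ B i) ⊆ A i := by
      intro x hx
      simp only [Finset.mem_inter, Finset.mem_union] at hx
      rcases hx.2 with h | h
      · exact h
      · exact absurd (Finset.mem_inter.mpr ⟨hx.1, h⟩) (by rw [hempty]; simp)
    have hle : (T ∩ (A i ∪ B i)).card ≤ a ^ i * k ^ 2 := by
      calc (T ∩ (A i ∪ B i)).card ≤ (A i).card := Finset.card_le_card hsub
        _ = a ^ i * k ^ 2 := hAcard i hi
    refine ⟨?_, ?_, fun _ _ => hle⟩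
    · rintro ⟨i', hi', _, hlt⟩
      rw [hTB i' hi'] at hlt
      simp at hlt
    · intro _ hne
      rw [hempty] at hne
      exact absurd hne (by simp [Finset.not_nonempty_empty])
  · rw [hT, Finset.card_biUnion (fun i hi j hj hij => hAA i hi j hj hij)]
    exact Finset.sum_congr rfl hAcard
  · rintro S ⟨hSsub, hSprop⟩
    have hkey : ∀ i ∈ Finset.Icc 1 ℓ, (S ∩ (A i ∪ B i)).card ≤ a ^ i * k ^ 2 := by
      intro i hi
      obtain ⟨h1, h2, h3⟩ := hSprop i hi
      by_cases hbig : ∃ i' ∈ Finset.Icc 1 ℓ, i < i' ∧ a ^ i' < (S ∩ B i').card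
      · rw [h1 hbig]; positivity
      · push_neg at hbig
        have hsmall := hbig
        by_cases hemp : S ∩ B i = ∅
        · exact h3 hsmall hemp
        · calc (S ∩ (A i ∪ B i)).card ≤ a ^ i * k :=
                h2 hsmall (Finset.nonempty_iff_ne_empty.mpr hemp)
            _ ≤ a ^ i * k ^ 2 := Nat.mul_le_mul_left _ (Nat.le_self_pow two_ne_zero k)
    have hScov : S = (Finset.Icc 1 ℓ).biUnion (fun i => S ∩ (A i ∪ B i)) := by
      ext x
      simp only [Finset.mem_biUnion, Finset.mem_inter]
      constructor
      · intro hx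
        obtain ⟨j, hj, hxj⟩ := Finset.mem_biUnion.mp (hSsub hx)
        exact ⟨j, hj, hx, hxj⟩
      · rintro ⟨j, _, hx, _⟩; exact hx
    calc S.card = ((Finset.Icc 1 ℓ).biUnion (fun i => S ∩ (A i ∪ B i))).card := by
            rw [← hScov]
      _ ≤ ∑ i ∈ Finset.Icc 1 ℓ, (S ∩ (A i ∪ B i)).card := Finset.card_biUnion_le
      _ ≤ ∑ i ∈ Finset.Icc 1 ℓ, a ^ i * k ^ 2 := Finset.sum_le_sum hkey
  · have hx1 : (a : ℝ) - 1 ≠ 0 := by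
      have : (2 : ℝ) ≤ (a : ℝ) := by exact_mod_cast ha
      linarith
    push_cast
    rw [← Finset.sum_mul, eq_div_iff hx1]
    calc (∑ i ∈ Finset.Icc 1 ℓ, (a : ℝ) ^ i) * (k : ℝ) ^ 2 * ((a : ℝ) - 1)
        = (∑ i ∈ Finset.Icc 1 ℓ, (a : ℝ) ^ i) * ((a : ℝ) - 1) * (k : ℝ) ^ 2 := by ring
      _ = (a : ℝ) * ((a : ℝ) ^ ℓ - 1) * (k : ℝ) ^ 2 := by rw [geom_aux]
      _ = (a : ℝ) * (k : ℝ) ^ 2 * ((a : ℝ) ^ ℓ - 1) := by ring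
end

section
/- In the hardness construction with parameters k, ℓ, r and α ≥ 2, and with the linear function f(S) = Σ_{i=1}^ℓ α^{-i}·|S ∩ (A_i ∪ B_i)|, every set S ∈ I satisfies f(S) ≤ k + ℓ + Σ_{i=1}^ℓ α^{-i}·|S ∩ A_i|. -/
/-- In the hardness construction, with the linear function
`f S = ∑_{i=1}^ℓ a^{-i} · |S ∩ (A i ∪ B i)|`, every independent set `S` satisfies
`f S ≤ k + ℓ + ∑_{i=1}^ℓ a^{-i} · |S ∩ A i|`. -/
theorem statement8 {γ : Type*} [DecidableEq γ]
    (k ℓ r a : ℕ) (hk : 1 ≤ k) (hℓ : 1 ≤ ℓ) (hr : 1 ≤ r) (ha : 2 ≤ a)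
    (A B : ℕ → Finset γ)
    (hAcard : ∀ i ∈ Finset.Icc 1 ℓ, (A i).card = a ^ i * k ^ 2)
    (hBcard : ∀ i ∈ Finset.Icc 1 ℓ, (B i).card = a ^ i * r * k ^ 2)
    (hAA : ∀ i ∈ Finset.Icc 1 ℓ, ∀ j ∈ Finset.Icc 1 ℓ, i ≠ j → Disjoint (A i) (A j))
    (hBB : ∀ i ∈ Finset.Icc 1 ℓ, ∀ j ∈ Finset.Icc 1 ℓ, i ≠ j → Disjoint (B i) (B j))
    (hAB : ∀ i ∈ Finset.Icc 1 ℓ, ∀ j ∈ Finset.Icc 1 ℓ, Disjoint (A i) (B j))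
    (f : Finset γ → ℝ)
    (hf : ∀ S : Finset γ,
      f S = ∑ i ∈ Finset.Icc 1 ℓ, ((a : ℝ) ^ i)⁻¹ * ((S ∩ (A i ∪ B i)).card : ℝ)) :
    ∀ S : Finset γ, hcIndep k ℓ a A B S →
      f S ≤ (k : ℝ) + (ℓ : ℝ) +
        ∑ i ∈ Finset.Icc 1 ℓ, ((a : ℝ) ^ i)⁻¹ * ((S ∩ A i).card : ℝ) := by
  intro S hS
  obtain ⟨-, hInd⟩ := hS
  have haR : (0:ℝ) < (a:ℝ) := by positivity
  have hapos : ∀ i : ℕ, (0:ℝ) < (a:ℝ) ^ i := fun i => pow_pos haR i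
  set T := Finset.Icc 1 ℓ with hT
  -- split cardinalities
  have hsplit : ∀ i ∈ T, ((S ∩ (A i ∪ B i)).card : ℝ)
      = ((S ∩ A i).card : ℝ) + ((S ∩ B i).card : ℝ) := by
    intro i hi
    have hdisj : Disjoint (S ∩ A i) (S ∩ B i) :=
      (hAB i hi i hi).mono Finset.inter_subset_right Finset.inter_subset_right
    rw [Finset.inter_union_distrib_left, Finset.card_union_of_disjoint hdisj]
    push_cast; ring
  have key : ∑ i ∈ T, ((a:ℝ) ^ i)⁻¹ * ((S ∩ B i).card : ℝ) ≤ (k:ℝ) + (ℓ:ℝ) := by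
    have hone : ∀ i ∈ T, (S ∩ B i).card ≤ a ^ i →
        ((a:ℝ) ^ i)⁻¹ * ((S ∩ B i).card : ℝ) ≤ 1 := by
      intro i _ h
      rw [inv_mul_le_iff₀ (hapos i), mul_one]
      exact_mod_cast h
    by_cases hV : ∃ i' ∈ T, a ^ i' < (S ∩ B i').card
    · classical
      set V := T.filter (fun i => a ^ i < (S ∩ B i).card) with hVdef
      have hVne : V.Nonempty := by
        obtain ⟨i', hi', h⟩ := hV
        exact ⟨i', Finset.mem_filter.mpr ⟨hi', h⟩⟩
      set m := V.max' hVne with hm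
      have hmV : m ∈ V := V.max'_mem hVne
      have hmT : m ∈ T := (Finset.mem_filter.mp hmV).1
      have hmlt : a ^ m < (S ∩ B m).card := (Finset.mem_filter.mp hmV).2
      have hmax : ∀ j ∈ T, m < j → (S ∩ B j).card ≤ a ^ j := by
        intro j hj hlt
        by_contra h
        push_neg at h
        exact absurd (V.le_max' j (Finset.mem_filter.mpr ⟨hj, h⟩)) (not_le.mpr hlt)
      -- term at m
      have hmterm : ((a:ℝ) ^ m)⁻¹ * ((S ∩ B m).card : ℝ) ≤ (k:ℝ) := by
        have hne : (S ∩ B m).Nonempty :=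
          Finset.card_pos.mp (lt_of_le_of_lt (Nat.zero_le _) hmlt)
        have h1 := (hInd m hmT).2.1 hmax hne
        have h2 : (S ∩ B m).card ≤ (S ∩ (A m ∪ B m)).card :=
          Finset.card_le_card (Finset.inter_subset_inter (subset_refl S) Finset.subset_union_right)
        have h3 : ((S ∩ B m).card : ℝ) ≤ (a:ℝ) ^ m * (k:ℝ) := by
          exact_mod_cast le_trans h2 h1
        rw [inv_mul_le_iff₀ (hapos m)]
        calc ((S ∩ B m).card : ℝ) ≤ (a:ℝ) ^ m * (k:ℝ) := h3
          _ = (a:ℝ) ^ m * (k:ℝ) := rfl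
      -- terms away from m
      have hrest : ∀ i ∈ T.erase m, ((a:ℝ) ^ i)⁻¹ * ((S ∩ B i).card : ℝ) ≤ 1 := by
        intro i hi
        have hiT : i ∈ T := Finset.mem_of_mem_erase hi
        have hiNe : i ≠ m := Finset.ne_of_mem_erase hi
        rcases lt_or_gt_of_ne hiNe with hlt | hgt
        · have hz := (hInd i hiT).1 ⟨m, hmT, hlt, hmlt⟩
          have : (S ∩ B i).card = 0 := by
            have h2 : (S ∩ B i).card ≤ (S ∩ (A i ∪ B i)).card :=
              Finset.card_le_card (Finset.inter_subset_inter (subset_refl S) Finset.subset_union_right)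
            omega
          exact hone i hiT (by omega)
        · exact hone i hiT (hmax i hiT hgt)
      have hsum : ∑ i ∈ T, ((a:ℝ) ^ i)⁻¹ * ((S ∩ B i).card : ℝ)
          = ((a:ℝ) ^ m)⁻¹ * ((S ∩ B m).card : ℝ)
            + ∑ i ∈ T.erase m, ((a:ℝ) ^ i)⁻¹ * ((S ∩ B i).card : ℝ) :=
        (Finset.add_sum_erase T _ hmT).symm
      have hcard : ((T.erase m).card : ℝ) ≤ (ℓ:ℝ) := by
        have : (T.erase m).card ≤ T.card := Finset.card_erase_le
        have hTc : T.card = ℓ := by simp [hT]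
        exact_mod_cast le_trans this (le_of_eq hTc)
      calc ∑ i ∈ T, ((a:ℝ) ^ i)⁻¹ * ((S ∩ B i).card : ℝ)
          = _ + _ := hsum
        _ ≤ (k:ℝ) + ((T.erase m).card : ℝ) := by
            gcongr
            calc ∑ i ∈ T.erase m, ((a:ℝ) ^ i)⁻¹ * ((S ∩ B i).card : ℝ)
                ≤ ∑ i ∈ T.erase m, (1:ℝ) := Finset.sum_le_sum hrest
              _ = ((T.erase m).card : ℝ) := by simp
        _ ≤ (k:ℝ) + (ℓ:ℝ) := by linarith
    · push_neg at hV
      have hkR : (0:ℝ) ≤ (k:ℝ) := by positivity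
      calc ∑ i ∈ T, ((a:ℝ) ^ i)⁻¹ * ((S ∩ B i).card : ℝ)
          ≤ ∑ i ∈ T, (1:ℝ) := Finset.sum_le_sum (fun i hi => hone i hi (hV i hi))
        _ = (T.card : ℝ) := by simp
        _ = (ℓ:ℝ) := by simp [hT]
        _ ≤ (k:ℝ) + (ℓ:ℝ) := by linarith
  rw [hf]
  have : ∑ i ∈ T, ((a:ℝ) ^ i)⁻¹ * ((S ∩ (A i ∪ B i)).card : ℝ)
      = ∑ i ∈ T, ((a:ℝ) ^ i)⁻¹ * ((S ∩ A i).card : ℝ)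
        + ∑ i ∈ T, ((a:ℝ) ^ i)⁻¹ * ((S ∩ B i).card : ℝ) := by
    rw [← Finset.sum_add_distrib]
    refine Finset.sum_congr rfl fun i hi => ?_
    rw [hsplit i hi]; ring
  rw [this]
  linarith
end

section
/- Let c ≥ 0, α ≥ 1, β > 0, p > 0 be real numbers, let ε be a real number with 0 < ε ≤ c + α, and set δ = ε/(2βp(c + α)). Let s, a, a*, OPT be real numbers with a*, OPT ≥ 0, such that c·s + a* ≥ (1 − βδp)·OPT and a ≥ a*/α. Then max(s, a) ≥ OPT/(c + α + ε). -/
/-- Numerical core of Corollary 1.3. Let `c ≥ 0`, `α ≥ 1`, `β > 0`,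
`p > 0` be reals, `0 < ε ≤ c + α`, and `δ = ε / (2βp(c + α))`. If `a* , OPT ≥ 0`,
`c·s + a* ≥ (1 − βδp)·OPT` and `a ≥ a*/α`, then `max s a ≥ OPT / (c + α + ε)`. -/
theorem statement10 (c α β p ε : ℝ)
    (hc : 0 ≤ c) (hα : 1 ≤ α) (hβ : 0 < β) (hp : 0 < p)
    (hε0 : 0 < ε) (hε1 : ε ≤ c + α)
    (δ : ℝ) (hδ : δ = ε / (2 * β * p * (c + α)))
    (s a astar OPT : ℝ) (hastar : 0 ≤ astar) (hOPT : 0 ≤ OPT)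
    (h1 : c * s + astar ≥ (1 - β * δ * p) * OPT)
    (h2 : a ≥ astar / α) :
    max s a ≥ OPT / (c + α + ε) := by
  have hA : 0 < c + α := by linarith
  have hα0 : 0 < α := by linarith
  have hβδp : β * δ * p = ε / (2 * (c + α)) := by
    rw [hδ]; field_simp
  rw [hβδp] at h1
  have hs : s ≤ max s a := le_max_left _ _
  have ha : a ≤ max s a := le_max_right _ _
  have h2' : astar ≤ α * a := by
    rw [ge_iff_le, div_le_iff₀ hα0] at h2; linarith
  have hm0 : 0 ≤ max s a := le_trans (le_trans (div_nonneg hastar hα0.le) h2) ha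
  have hdiv : ε / (2 * (c + α)) * OPT * (2 * (c + α)) = ε * OPT := by
    field_simp
  have key : 2 * (c + α) ^ 2 * max s a ≥ (2 * (c + α) - ε) * OPT := by
    nlinarith [mul_le_mul_of_nonneg_left hs hc,
      mul_le_mul_of_nonneg_left ha hα0.le,
      mul_le_mul_of_nonneg_right (add_le_add (mul_le_mul_of_nonneg_left hs hc)
        (h2'.trans (mul_le_mul_of_nonneg_left ha hα0.le))).ge (le_of_lt hA)]
  rw [ge_iff_le, div_le_iff₀ (by linarith : 0 < c + α + ε)]
  have h3 : 2 * (c + α) ^ 2 * OPT ≤ 2 * (c + α) ^ 2 * (max s a * (c + α + ε)) := by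
    nlinarith [mul_nonneg (mul_nonneg hε0.le (sub_nonneg.mpr hε1)) hOPT,
      mul_le_mul_of_nonneg_left key (show (0:ℝ) ≤ c + α + ε by linarith)]
  exact le_of_mul_le_mul_left h3 (by positivity)
end

section
/- Let N be a finite set, let f: 2^N → ℝ be a submodular function, and let F be the multilinear extension of f. For u ∈ N and x ∈ [0,1]^N, let ∂_u F(x) = F(x with coordinate u set to 1) − F(x with coordinate u set to 0). Then for every x, y ∈ [0,1]^N with y_u ≤ x_u for all u ∈ N, it holds that F(x) − F(x − y) ≥ Σ_{u∈N} y_u · ∂_u F(x). -/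
/-- The multilinear extension `F` of a set function `f : Finset α → ℝ`:
`F x = ∑_{S ⊆ N} f S · ∏_{u ∈ S} x u · ∏_{u ∉ S} (1 − x u)`. -/
noncomputable def multilinearExt {α : Type*} [Fintype α] [DecidableEq α]
    (f : Finset α → ℝ) (x : α → ℝ) : ℝ :=
  ∑ S : Finset α, f S * ((∏ u ∈ S, x u) * ∏ u ∈ Sᶜ, (1 - x u))

set_option linter.unusedSectionVars false
set_option linter.unusedVariables false

section Aux
variable {α : Type*} [Fintype α] [DecidableEq α]





lemma prod_update_not_mem {S : Finset α} {c : α} (h : c ∉ S) (p : α → ℝ) (a : ℝ) :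
    ∏ w ∈ S, Function.update p c a w = ∏ w ∈ S, p w :=
  Finset.prod_congr rfl fun w hw => Function.update_of_ne (fun e => h (by rwa [e] at hw)) _ _

lemma one_sub_update (p : α → ℝ) (c : α) (a : ℝ) :
    (fun w => 1 - Function.update p c a w) = Function.update (fun w => 1 - p w) c (1 - a) := by
  funext w
  by_cases h : w = c
  · subst h; simp
  · simp [Function.update_of_ne h]

/-- F is affine in each coordinate. -/
lemma mlext_affine (f : Finset α → ℝ) (z : α → ℝ) (u : α) :
    multilinearExt f z =
      z u * multilinearExt f (Function.update z u 1)
        + (1 - z u) * multilinearExt f (Function.update z u 0) := by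
  unfold multilinearExt
  rw [Finset.mul_sum, Finset.mul_sum, ← Finset.sum_add_distrib]
  refine Finset.sum_congr rfl fun S _ => ?_
  by_cases hu : u ∈ S
  · have hu' : u ∉ Sᶜ := by simp [hu]
    have h1 : ∏ w ∈ S, Function.update z u (1:ℝ) w = 1 * ∏ w ∈ S \ {u}, z w :=
      Finset.prod_update_of_mem hu z 1
    have h0 : ∏ w ∈ S, Function.update z u (0:ℝ) w = 0 * ∏ w ∈ S \ {u}, z w :=
      Finset.prod_update_of_mem hu z 0
    have hz : ∏ w ∈ S, z w = z u * ∏ w ∈ S.erase u, z w := (Finset.mul_prod_erase S z hu).symm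
    have hc1 : ∏ w ∈ Sᶜ, (1 - Function.update z u (1:ℝ) w) = ∏ w ∈ Sᶜ, (1 - z w) := by
      rw [show (fun w => 1 - Function.update z u (1:ℝ) w) = _ from one_sub_update z u 1]
      exact prod_update_not_mem hu' _ _
    have hc0 : ∏ w ∈ Sᶜ, (1 - Function.update z u (0:ℝ) w) = ∏ w ∈ Sᶜ, (1 - z w) := by
      rw [show (fun w => 1 - Function.update z u (0:ℝ) w) = _ from one_sub_update z u 0]
      exact prod_update_not_mem hu' _ _
    rw [h1, h0, hz, hc1, hc0, Finset.sdiff_singleton_eq_erase]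
    ring
  · have hu' : u ∈ Sᶜ := by simp [hu]
    have h1 : ∏ w ∈ S, Function.update z u (1:ℝ) w = ∏ w ∈ S, z w :=
      prod_update_not_mem hu z 1
    have h0 : ∏ w ∈ S, Function.update z u (0:ℝ) w = ∏ w ∈ S, z w :=
      prod_update_not_mem hu z 0
    have hc1 : ∏ w ∈ Sᶜ, (1 - Function.update z u (1:ℝ) w)
        = 0 * ∏ w ∈ Sᶜ \ {u}, (1 - z w) := by
      rw [show (fun w => 1 - Function.update z u (1:ℝ) w) = _ from one_sub_update z u 1]
      simpa using Finset.prod_update_of_mem hu' (fun w => 1 - z w) (1 - 1)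
    have hc0 : ∏ w ∈ Sᶜ, (1 - Function.update z u (0:ℝ) w)
        = 1 * ∏ w ∈ Sᶜ \ {u}, (1 - z w) := by
      rw [show (fun w => 1 - Function.update z u (0:ℝ) w) = _ from one_sub_update z u 0]
      simpa using Finset.prod_update_of_mem hu' (fun w => 1 - z w) (1 - 0)
    have hzc : ∏ w ∈ Sᶜ, (1 - z w) = (1 - z u) * ∏ w ∈ Sᶜ.erase u, (1 - z w) :=
      (Finset.mul_prod_erase Sᶜ _ hu').symm
    rw [h1, h0, hc1, hc0, hzc, Finset.sdiff_singleton_eq_erase]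
    ring

lemma mlext_update (f : Finset α → ℝ) (q : α → ℝ) (v : α) (c : ℝ) :
    multilinearExt f (Function.update q v c) =
      c * multilinearExt f (Function.update q v 1)
        + (1 - c) * multilinearExt f (Function.update q v 0) := by
  have := mlext_affine f (Function.update q v c) v
  simpa [Function.update_idem, Function.update_self] using this
/-- per-set term of the multilinear extension at a doubly-updated point -/
noncomputable def tt (f : Finset α → ℝ) (z : α → ℝ) (u v : α) (S : Finset α) (a b : ℝ) : ℝ :=
  f S * ((∏ w ∈ S, Function.update (Function.update z v b) u a w) *
         ∏ w ∈ Sᶜ, (1 - Function.update (Function.update z v b) u a w))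

lemma one_sub_upd2 (z : α → ℝ) (u v : α) (a b : ℝ) :
    (fun w => 1 - Function.update (Function.update z v b) u a w)
      = Function.update (Function.update (fun w => 1 - z w) v (1 - b)) u (1 - a) := by
  rw [one_sub_update, one_sub_update]

lemma compl_prod_congr (z : α → ℝ) (u v : α) (a b : ℝ) (C : Finset α) :
    ∏ w ∈ C, (1 - Function.update (Function.update z v b) u a w)
      = ∏ w ∈ C, Function.update (Function.update (fun w => 1 - z w) v (1 - b)) u (1 - a) w :=
  Finset.prod_congr rfl fun w _ => congrFun (one_sub_upd2 z u v a b) w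

lemma tt_base (f : Finset α → ℝ) (z : α → ℝ) {u v : α} (huv : u ≠ v) {T : Finset α}
    (huT : u ∉ T) (hvT : v ∉ T) (a b : ℝ) :
    tt f z u v T a b = f T * ((1 - a) * (1 - b)) *
      ((∏ w ∈ T, z w) * ∏ w ∈ (Tᶜ.erase u).erase v, (1 - z w)) := by
  have huc : u ∈ Tᶜ := Finset.mem_compl.mpr huT
  have hvc : v ∈ Tᶜ.erase u := Finset.mem_erase.mpr ⟨Ne.symm huv, Finset.mem_compl.mpr hvT⟩
  unfold tt
  rw [prod_update_not_mem huT, prod_update_not_mem hvT, compl_prod_congr,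
    Finset.prod_update_of_mem huc, Finset.sdiff_singleton_eq_erase,
    Finset.prod_update_of_mem hvc, Finset.sdiff_singleton_eq_erase]
  ring

lemma tt_u (f : Finset α → ℝ) (z : α → ℝ) {u v : α} (huv : u ≠ v) {T : Finset α}
    (huT : u ∉ T) (hvT : v ∉ T) (a b : ℝ) :
    tt f z u v (insert u T) a b = f (insert u T) * (a * (1 - b)) *
      ((∏ w ∈ T, z w) * ∏ w ∈ (Tᶜ.erase u).erase v, (1 - z w)) := by
  have hui : u ∈ insert u T := Finset.mem_insert_self u T
  have huc : u ∉ (insert u T)ᶜ := by simp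
  have hvc : v ∈ (insert u T)ᶜ := by
    rw [Finset.mem_compl, Finset.mem_insert]
    push_neg
    exact ⟨Ne.symm huv, hvT⟩
  unfold tt
  rw [Finset.prod_update_of_mem hui, Finset.sdiff_singleton_eq_erase,
    Finset.erase_insert huT, prod_update_not_mem hvT, compl_prod_congr,
    prod_update_not_mem huc, Finset.prod_update_of_mem hvc,
    Finset.sdiff_singleton_eq_erase, Finset.compl_insert]
  ring

lemma tt_v (f : Finset α → ℝ) (z : α → ℝ) {u v : α} (huv : u ≠ v) {T : Finset α}
    (huT : u ∉ T) (hvT : v ∉ T) (a b : ℝ) :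
    tt f z u v (insert v T) a b = f (insert v T) * ((1 - a) * b) *
      ((∏ w ∈ T, z w) * ∏ w ∈ (Tᶜ.erase u).erase v, (1 - z w)) := by
  have hvi : v ∈ insert v T := Finset.mem_insert_self v T
  have hui : u ∉ insert v T := by
    rw [Finset.mem_insert]; push_neg; exact ⟨huv, huT⟩
  have huc : u ∈ (insert v T)ᶜ := Finset.mem_compl.mpr hui
  have hvc : v ∉ ((insert v T)ᶜ).erase u := by simp
  unfold tt
  rw [prod_update_not_mem hui, Finset.prod_update_of_mem hvi,
    Finset.sdiff_singleton_eq_erase, Finset.erase_insert hvT, compl_prod_congr,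
    Finset.prod_update_of_mem huc, Finset.sdiff_singleton_eq_erase,
    prod_update_not_mem hvc, Finset.compl_insert, Finset.erase_right_comm]
  ring

lemma tt_uv (f : Finset α → ℝ) (z : α → ℝ) {u v : α} (huv : u ≠ v) {T : Finset α}
    (huT : u ∉ T) (hvT : v ∉ T) (a b : ℝ) :
    tt f z u v (insert u (insert v T)) a b = f (insert u (insert v T)) * (a * b) *
      ((∏ w ∈ T, z w) * ∏ w ∈ (Tᶜ.erase u).erase v, (1 - z w)) := by
  have hui' : u ∉ insert v T := by
    rw [Finset.mem_insert]; push_neg; exact ⟨huv, huT⟩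
  have hui : u ∈ insert u (insert v T) := Finset.mem_insert_self _ _
  have hvi : v ∈ insert v T := Finset.mem_insert_self v T
  have huc : u ∉ (insert u (insert v T))ᶜ := by simp
  have hvc : v ∉ (insert u (insert v T))ᶜ := by simp
  unfold tt
  rw [Finset.prod_update_of_mem hui, Finset.sdiff_singleton_eq_erase,
    Finset.erase_insert hui', Finset.prod_update_of_mem hvi,
    Finset.sdiff_singleton_eq_erase, Finset.erase_insert hvT, compl_prod_congr,
    prod_update_not_mem huc, prod_update_not_mem hvc, Finset.compl_insert,
    Finset.compl_insert, Finset.erase_right_comm]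
  ring

lemma secondDiff (f : Finset α → ℝ)
    (hsub : ∀ S T : Finset α, f S + f T ≥ f (S ∪ T) + f (S ∩ T))
    (z : α → ℝ) (hz0 : ∀ w, 0 ≤ z w) (hz1 : ∀ w, z w ≤ 1) {u v : α} (huv : u ≠ v) :
    multilinearExt f (Function.update (Function.update z v 1) u 1)
        - multilinearExt f (Function.update (Function.update z v 1) u 0)
      ≤ multilinearExt f (Function.update (Function.update z v 0) u 1)
        - multilinearExt f (Function.update (Function.update z v 0) u 0) := by
  have hkey : ∑ S : Finset α,
      (tt f z u v S 1 1 - tt f z u v S 0 1 - tt f z u v S 1 0 + tt f z u v S 0 0) ≤ 0 := by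
    rw [← Finset.powerset_univ]
    have hvu : v ∈ (Finset.univ : Finset α).erase u :=
      Finset.mem_erase.mpr ⟨Ne.symm huv, Finset.mem_univ v⟩
    have hv1 : v ∉ ((Finset.univ : Finset α).erase u).erase v := Finset.notMem_erase v _
    have hu1 : u ∉ insert v (((Finset.univ : Finset α).erase u).erase v) := by
      intro h
      rcases Finset.mem_insert.mp h with h | h
      · exact huv h
      · exact (Finset.mem_erase.mp (Finset.mem_of_mem_erase h)).1 rfl
    have h2 : insert u (insert v (((Finset.univ : Finset α).erase u).erase v))
        = (Finset.univ : Finset α) := by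
      rw [Finset.insert_erase hvu, Finset.insert_erase (Finset.mem_univ u)]
    rw [← h2, Finset.sum_powerset_insert hu1, Finset.sum_powerset_insert hv1,
      Finset.sum_powerset_insert hv1, ← Finset.sum_add_distrib, ← Finset.sum_add_distrib,
      ← Finset.sum_add_distrib]
    apply Finset.sum_nonpos
    intro T hT
    have hTs := Finset.mem_powerset.mp hT
    have huT : u ∉ T := fun h =>
      (Finset.mem_erase.mp (Finset.mem_of_mem_erase (hTs h))).1 rfl
    have hvT : v ∉ T := fun h => (Finset.mem_erase.mp (hTs h)).1 rfl
    have hW : 0 ≤ (∏ w ∈ T, z w) * ∏ w ∈ (Tᶜ.erase u).erase v, (1 - z w) :=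
      mul_nonneg (Finset.prod_nonneg fun w _ => hz0 w)
        (Finset.prod_nonneg fun w _ => by linarith [hz1 w])
    have hun : insert u T ∪ insert v T = insert u (insert v T) := by
      rw [Finset.insert_union, Finset.union_insert, Finset.union_self]
    have huvT : u ∉ insert v T := by
      rw [Finset.mem_insert]; push_neg; exact ⟨huv, huT⟩
    have hin : insert u T ∩ insert v T = T := by
      rw [Finset.insert_inter_of_notMem huvT]
      exact Finset.inter_eq_left.mpr (Finset.subset_insert v T)
    have hbr : f T - f (insert u T) - f (insert v T) + f (insert u (insert v T)) ≤ 0 := by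
      have := hsub (insert u T) (insert v T)
      rw [hun, hin] at this
      linarith
    have h3 : (f T - f (insert u T) - f (insert v T) + f (insert u (insert v T))) *
        ((∏ w ∈ T, z w) * ∏ w ∈ (Tᶜ.erase u).erase v, (1 - z w)) ≤ 0 :=
      mul_nonpos_of_nonpos_of_nonneg hbr hW
    simp only [tt_base f z huv huT hvT, tt_u f z huv huT hvT, tt_v f z huv huT hvT,
      tt_uv f z huv huT hvT]
    nlinarith [h3]
  have e : ∀ a b : ℝ, multilinearExt f (Function.update (Function.update z v b) u a)
      = ∑ S : Finset α, tt f z u v S a b := fun a b => rfl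
  rw [e 1 1, e 0 1, e 1 0, e 0 0]
  simp only [Finset.sum_add_distrib, Finset.sum_sub_distrib] at hkey
  linarith
lemma D_coord (f : Finset α → ℝ)
    (hsub : ∀ S T : Finset α, f S + f T ≥ f (S ∪ T) + f (S ∩ T))
    (p : α → ℝ) (hp0 : ∀ w, 0 ≤ p w) (hp1 : ∀ w, p w ≤ 1) (u v : α) {a b : ℝ} (hba : b ≤ a) :
    multilinearExt f (Function.update (Function.update p v a) u 1)
        - multilinearExt f (Function.update (Function.update p v a) u 0)
      ≤ multilinearExt f (Function.update (Function.update p v b) u 1)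
        - multilinearExt f (Function.update (Function.update p v b) u 0) := by
  by_cases hvu : v = u
  · subst hvu
    simp [Function.update_idem]
  · have huv : u ≠ v := fun h => hvu h.symm
    have hswap : ∀ c d : ℝ, Function.update (Function.update p v c) u d
        = Function.update (Function.update p u d) v c := fun c d =>
      Function.update_comm hvu c d p
    have key := secondDiff f hsub p hp0 hp1 huv
    have e1 : ∀ c d : ℝ, multilinearExt f (Function.update (Function.update p v c) u d)
        = c * multilinearExt f (Function.update (Function.update p v 1) u d)
          + (1 - c) * multilinearExt f (Function.update (Function.update p v 0) u d) := by
      intro c d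
      rw [hswap c d, mlext_update, ← hswap 1 d, ← hswap 0 d]
    rw [e1 a 1, e1 a 0, e1 b 1, e1 b 0]
    have hm := mul_nonneg (sub_nonneg.mpr hba) (sub_nonneg.mpr key)
    nlinarith [hm]

lemma D_mono (f : Finset α → ℝ)
    (hsub : ∀ S T : Finset α, f S + f T ≥ f (S ∪ T) + f (S ∩ T))
    (x z : α → ℝ) (hx0 : ∀ w, 0 ≤ x w) (hx1 : ∀ w, x w ≤ 1)
    (hz0 : ∀ w, 0 ≤ z w) (hzx : ∀ w, z w ≤ x w) (u : α) :
    multilinearExt f (Function.update x u 1) - multilinearExt f (Function.update x u 0)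
      ≤ multilinearExt f (Function.update z u 1) - multilinearExt f (Function.update z u 0) := by
  have main : ∀ s : Finset α,
      multilinearExt f (Function.update x u 1) - multilinearExt f (Function.update x u 0)
        ≤ multilinearExt f (Function.update (fun w => if w ∈ s then z w else x w) u 1)
          - multilinearExt f (Function.update (fun w => if w ∈ s then z w else x w) u 0) := by
    intro s
    induction s using Finset.induction_on with
    | empty => simp
    | @insert v s hvs ih =>
      have hupd : (fun w => if w ∈ insert v s then z w else x w)
          = Function.update (fun w => if w ∈ s then z w else x w) v (z v) := by
        funext w
        by_cases hw : w = v
        · subst hw; simp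
        · simp [Function.update_of_ne hw, Finset.mem_insert, hw]
      have hself : (fun w => if w ∈ s then z w else x w)
          = Function.update (fun w => if w ∈ s then z w else x w) v (x v) := by
        funext w
        by_cases hw : w = v
        · subst hw; simp [hvs]
        · simp [Function.update_of_ne hw]
      have hh0 : ∀ w, (0:ℝ) ≤ (if w ∈ s then z w else x w) := fun w => by
        split_ifs
        exacts [hz0 w, hx0 w]
      have hh1 : ∀ w, (if w ∈ s then z w else x w) ≤ (1:ℝ) := fun w => by
        split_ifs
        exacts [le_trans (hzx w) (hx1 w), hx1 w]
      have step := D_coord f hsub (fun w => if w ∈ s then z w else x w) hh0 hh1 u v (hzx v)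
      rw [hupd]
      refine ih.trans ?_
      conv_lhs => rw [hself]
      exact step
  have h := main Finset.univ
  simpa using h


end Aux

/-- Let `f` be a submodular function on a finite ground set and `F`
its multilinear extension. For `x, y ∈ [0,1]^N` with `y ≤ x` (coordinatewise),
`F x − F (x − y) ≥ ∑_u y u · ∂_u F x`, where
`∂_u F x = F (x with coordinate u set to 1) − F (x with coordinate u set to 0)`. -/
theorem statement11 {α : Type*} [Fintype α] [DecidableEq α]
    (f : Finset α → ℝ)
    (hsub : ∀ S T : Finset α, f S + f T ≥ f (S ∪ T) + f (S ∩ T))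
    (x y : α → ℝ)
    (hx0 : ∀ u, 0 ≤ x u) (hx1 : ∀ u, x u ≤ 1)
    (hy0 : ∀ u, 0 ≤ y u) (hy1 : ∀ u, y u ≤ 1)
    (hyx : ∀ u, y u ≤ x u) :
    multilinearExt f x - multilinearExt f (x - y) ≥
      ∑ u : α, y u *
        (multilinearExt f (Function.update x u 1) -
          multilinearExt f (Function.update x u 0)) := by
  have main : ∀ s : Finset α,
      multilinearExt f x - multilinearExt f (fun w => if w ∈ s then x w - y w else x w)
        ≥ ∑ u ∈ s, y u *
            (multilinearExt f (Function.update x u 1) -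
              multilinearExt f (Function.update x u 0)) := by
    intro s
    induction s using Finset.induction_on with
    | empty => simp
    | @insert v s hvs ih =>
      have hupd : (fun w => if w ∈ insert v s then x w - y w else x w)
          = Function.update (fun w => if w ∈ s then x w - y w else x w) v (x v - y v) := by
        funext w
        by_cases hw : w = v
        · subst hw; simp
        · simp [Function.update_of_ne hw, Finset.mem_insert, hw]
      have hself : (fun w => if w ∈ s then x w - y w else x w)
          = Function.update (fun w => if w ∈ s then x w - y w else x w) v (x v) := by
        funext w
        by_cases hw : w = v
        · subst hw; simp [hvs]
        · simp [Function.update_of_ne hw]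
      have hh0 : ∀ w, (0:ℝ) ≤ (if w ∈ s then x w - y w else x w) := fun w => by
        split_ifs
        · linarith [hyx w]
        · exact hx0 w
      have hhx : ∀ w, (if w ∈ s then x w - y w else x w) ≤ x w := fun w => by
        split_ifs
        · linarith [hy0 w]
        · exact le_rfl
      -- F(p) - F(update p v (x v - y v)) = y v * (F(p[v:=1]) - F(p[v:=0]))
      set p : α → ℝ := fun w => if w ∈ s then x w - y w else x w with hp
      have hstep : multilinearExt f p
            - multilinearExt f (Function.update p v (x v - y v))
          = y v * (multilinearExt f (Function.update p v 1)
              - multilinearExt f (Function.update p v 0)) := by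
        have e1 : multilinearExt f p = (x v) * multilinearExt f (Function.update p v 1)
            + (1 - x v) * multilinearExt f (Function.update p v 0) := by
          conv_lhs => rw [hself]
          rw [mlext_update]
        rw [e1, mlext_update f p v (x v - y v)]
        ring
      have hD := D_mono f hsub x p hx0 hx1 hh0 hhx v
      have hDy : y v * (multilinearExt f (Function.update x v 1)
            - multilinearExt f (Function.update x v 0))
          ≤ y v * (multilinearExt f (Function.update p v 1)
              - multilinearExt f (Function.update p v 0)) :=
        mul_le_mul_of_nonneg_left hD (hy0 v)
      rw [hupd, Finset.sum_insert hvs]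
      have := ih
      linarith
  have h := main Finset.univ
  have he : (fun w => if w ∈ (Finset.univ : Finset α) then x w - y w else x w) = x - y := by
    funext w; simp
  rw [he] at h
  exact h
end

section
/- Let N be a finite set, let f: 2^N → ℝ be a submodular function, and let F be the multilinear extension of f. Then for every x, y, z ∈ [0,1]^N with x_u + y_u + z_u ≤ 1 for all u ∈ N, it holds that F(x + z) − F(x) ≥ F(x + y + z) − F(x + y). -/
open Finset

/-- Expansion of the multilinear extension over independent 4-state configurations. -/
lemma multilinearExt_eq_sum {α : Type*} [Fintype α] [DecidableEq α]
    (f : Finset α → ℝ) (p : α → Fin 4 → ℝ) (I : Finset (Fin 4))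
    (hone : ∀ u, ∑ i, p u i = 1) :
    multilinearExt f (fun u => ∑ i ∈ I, p u i) =
      ∑ ω ∈ Fintype.piFinset (fun _ : α => (univ : Finset (Fin 4))),
        (∏ u, p u (ω u)) * f (univ.filter (fun u => ω u ∈ I)) := by
  rw [← Finset.sum_fiberwise_of_maps_to
    (g := fun ω : α → Fin 4 => univ.filter (fun u => ω u ∈ I))
    (fun ω _ => Finset.mem_univ _)]
  unfold multilinearExt
  refine Finset.sum_congr rfl (fun S _ => ?_)
  have hfib : (Fintype.piFinset (fun _ : α => (univ : Finset (Fin 4)))).filter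
      (fun ω => univ.filter (fun u => ω u ∈ I) = S)
      = Fintype.piFinset (fun u => if u ∈ S then I else Iᶜ) := by
    ext ω
    simp only [Finset.mem_filter, Fintype.mem_piFinset, Finset.mem_univ, true_and,
      Finset.ext_iff, Finset.mem_filter]
    constructor
    · rintro ⟨-, h⟩ u
      have := h u
      by_cases hu : u ∈ S <;> simp [hu, Finset.mem_compl] at this ⊢ <;> tauto
    · intro h
      refine ⟨fun _ => trivial, fun u => ?_⟩
      have := h u
      by_cases hu : u ∈ S <;> simp [hu, Finset.mem_compl] at this ⊢ <;> tauto
  rw [hfib]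
  symm
  calc ∑ ω ∈ Fintype.piFinset (fun u => if u ∈ S then I else Iᶜ),
        (∏ u, p u (ω u)) * f (univ.filter (fun u => ω u ∈ I))
      = ∑ ω ∈ Fintype.piFinset (fun u => if u ∈ S then I else Iᶜ),
        (∏ u, p u (ω u)) * f S := by
        refine Finset.sum_congr rfl (fun ω hω => ?_)
        have hω' : ω ∈ (Fintype.piFinset (fun _ : α => (univ : Finset (Fin 4)))).filter
            (fun ω => univ.filter (fun u => ω u ∈ I) = S) := hfib ▸ hω
        rw [(Finset.mem_filter.mp hω').2]
    _ = (∏ u, ∑ i ∈ (if u ∈ S then I else Iᶜ), p u i) * f S := by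
        rw [← Finset.sum_mul, ← Finset.prod_univ_sum]
    _ = f S * ((∏ u ∈ S, (fun u => ∑ i ∈ I, p u i) u)
          * ∏ u ∈ Sᶜ, (1 - (fun u => ∑ i ∈ I, p u i) u)) := by
        rw [mul_comm]
        congr 1
        have hpull : ∀ u, (∑ i ∈ (if u ∈ S then I else Iᶜ), p u i)
            = if u ∈ S then ∑ i ∈ I, p u i else ∑ i ∈ Iᶜ, p u i := by
          intro u; split <;> rfl
        simp only [hpull]
        rw [Finset.prod_ite]
        have h1 : univ.filter (fun u => u ∈ S) = S := by ext u; simp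
        have h2 : univ.filter (fun u => ¬ u ∈ S) = Sᶜ := by ext u; simp
        rw [h1, h2]
        congr 1
        refine Finset.prod_congr rfl (fun u _ => ?_)
        have := Finset.sum_add_sum_compl I (p u)
        simp only [hone u] at this
        show ∑ i ∈ Iᶜ, p u i = 1 - ∑ i ∈ I, p u i
        linarith

/-- Let `f` be a submodular function on a finite ground set and `F`
its multilinear extension. For `x, y, z ∈ [0,1]^N` with `x u + y u + z u ≤ 1` for all
`u`, it holds that `F (x + z) − F x ≥ F (x + y + z) − F (x + y)`. -/
theorem statement12 {α : Type*} [Fintype α] [DecidableEq α]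
    (f : Finset α → ℝ)
    (hsub : ∀ S T : Finset α, f S + f T ≥ f (S ∪ T) + f (S ∩ T))
    (x y z : α → ℝ)
    (hx0 : ∀ u, 0 ≤ x u) (hy0 : ∀ u, 0 ≤ y u) (hz0 : ∀ u, 0 ≤ z u)
    (hsum : ∀ u, x u + y u + z u ≤ 1) :
    multilinearExt f (x + z) - multilinearExt f x ≥
      multilinearExt f (x + y + z) - multilinearExt f (x + y) := by
  classical
  set p : α → Fin 4 → ℝ := fun u => ![x u, y u, z u, 1 - (x u + y u + z u)] with hp
  have hone : ∀ u, ∑ i, p u i = 1 := by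
    intro u
    simp [hp, Fin.sum_univ_four]
  have hpnn : ∀ u i, 0 ≤ p u i := by
    intro u i
    fin_cases i <;> simp [hp] <;> linarith [hsum u, hx0 u, hy0 u, hz0 u]
  have hx : x = fun u => ∑ i ∈ ({0} : Finset (Fin 4)), p u i := by
    funext u; simp [hp]
  have hxy : x + y = fun u => ∑ i ∈ ({0, 1} : Finset (Fin 4)), p u i := by
    funext u
    rw [Finset.sum_pair (by decide : (0 : Fin 4) ≠ 1)]
    simp [hp]
  have hxz : x + z = fun u => ∑ i ∈ ({0, 2} : Finset (Fin 4)), p u i := by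
    funext u
    rw [Finset.sum_pair (by decide : (0 : Fin 4) ≠ 2)]
    simp [hp]
  have hxyz : x + y + z = fun u => ∑ i ∈ ({0, 1, 2} : Finset (Fin 4)), p u i := by
    funext u
    rw [show ({0, 1, 2} : Finset (Fin 4)) = insert 0 {1, 2} from rfl,
      Finset.sum_insert (by decide), Finset.sum_pair (by decide : (1 : Fin 4) ≠ 2)]
    simp [hp]; ring
  rw [hxyz, hxz, hxy, hx, multilinearExt_eq_sum f p _ hone,
    multilinearExt_eq_sum f p _ hone, multilinearExt_eq_sum f p _ hone,
    multilinearExt_eq_sum f p _ hone]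
  have key : ∀ ω ∈ Fintype.piFinset (fun _ : α => (univ : Finset (Fin 4))),
      0 ≤ (∏ u, p u (ω u)) *
        (f (univ.filter (fun u => ω u ∈ ({0, 2} : Finset (Fin 4))))
          + f (univ.filter (fun u => ω u ∈ ({0, 1} : Finset (Fin 4))))
          - (f (univ.filter (fun u => ω u ∈ ({0, 1, 2} : Finset (Fin 4))))
            + f (univ.filter (fun u => ω u ∈ ({0} : Finset (Fin 4)))))) := by
    intro ω _
    have hU : (univ.filter (fun u => ω u ∈ ({0, 2} : Finset (Fin 4)))) ∪
        (univ.filter (fun u => ω u ∈ ({0, 1} : Finset (Fin 4))))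
        = univ.filter (fun u => ω u ∈ ({0, 1, 2} : Finset (Fin 4))) := by
      rw [← Finset.filter_or]
      apply Finset.filter_congr
      intro u _
      generalize ω u = i
      revert i; decide
    have hI : (univ.filter (fun u => ω u ∈ ({0, 2} : Finset (Fin 4)))) ∩
        (univ.filter (fun u => ω u ∈ ({0, 1} : Finset (Fin 4))))
        = univ.filter (fun u => ω u ∈ ({0} : Finset (Fin 4))) := by
      rw [← Finset.filter_and]
      apply Finset.filter_congr
      intro u _
      generalize ω u = i
      revert i; decide
    have hw : 0 ≤ ∏ u, p u (ω u) := Finset.prod_nonneg (fun u _ => hpnn u (ω u))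
    have hs := hsub (univ.filter (fun u => ω u ∈ ({0, 2} : Finset (Fin 4))))
      (univ.filter (fun u => ω u ∈ ({0, 1} : Finset (Fin 4))))
    rw [hU, hI] at hs
    exact mul_nonneg hw (by linarith)
  have total := Finset.sum_nonneg key
  simp only [mul_sub, mul_add, Finset.sum_sub_distrib, Finset.sum_add_distrib] at total
  linarith
end

section
/- Let N be a finite set with |N| = n, let ℓ ≥ 1 be an integer, and let p' ∈ (0,1] with ℓ·p' ≤ 1. Consider the following random process: draw counts (w_1, ..., w_ℓ) by performing n independent trials, each of which is discarded with probability 1 − ℓ·p' and otherwise lands in a uniformly random one of ℓ bins, letting w_i be the number of trials in bin i; independently, draw a uniformly random linear order π of N; and set R_i to be the set of elements of N occupying positions (Σ_{j<i} w_j) + 1 through Σ_{j≤i} w_j in π. Then for every choice of pairwise disjoint subsets N_1, ..., N_ℓ of N, the probability that R_i = N_i for all i ∈ {1,...,ℓ} equals (p')^{m} · (1 − ℓ·p')^{n − m}, where m = Σ_{i=1}^ℓ |N_i|. Equivalently, (R_1, ..., R_ℓ) has the same joint distribution as assigning each element of N, independently, to each bin i with probability p' (and to no bin with probability 1 − ℓ·p').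 -/
open Finset

private lemma filt_comp_card {n : ℕ} {β : Type*} [Fintype β] [DecidableEq β]
    (e : Fin n ≃ β) (P : β → Prop) [DecidablePred P] :
    (univ.filter fun p : Fin n => P (e p)).card = (univ.filter P).card := by
  rw [← Finset.card_image_of_injective (univ.filter fun p : Fin n => P (e p)) e.injective]
  congr 1
  ext a
  simp only [mem_image, mem_filter, mem_univ, true_and]
  exact ⟨fun ⟨p, hp, he⟩ => he ▸ hp, fun h => ⟨e.symm a, by simpa using h, by simp⟩⟩

private lemma image_filt_comp {n : ℕ} (e : Equiv.Perm (Fin n)) (P : Fin n → Prop)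
    [DecidablePred P] :
    (univ.filter fun p : Fin n => P (e p)).image e = univ.filter P := by
  ext a
  simp only [mem_image, mem_filter, mem_univ, true_and]
  exact ⟨fun ⟨p, hp, he⟩ => he ▸ hp, fun h => ⟨e.symm a, by simpa using h, by simp⟩⟩

private lemma monotone_lt_iff {n : ℕ} {g : Fin n → ℕ} (hg : Monotone g) (k : ℕ) (p : Fin n) :
    g p < k ↔ (p : ℕ) < (univ.filter fun q => g q < k).card := by
  constructor
  · intro h
    have hsub : Finset.Iic p ⊆ univ.filter fun q => g q < k := by
      intro q hq
      simp only [Finset.mem_Iic] at hq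
      simp only [mem_filter, mem_univ, true_and]
      exact lt_of_le_of_lt (hg hq) h
    have := Finset.card_le_card hsub
    rw [Fin.card_Iic] at this
    omega
  · intro h
    by_contra hc
    have hsub : (univ.filter fun q => g q < k) ⊆ Finset.Iio p := by
      intro q hq
      simp only [mem_filter, mem_univ, true_and] at hq
      simp only [Finset.mem_Iio]
      by_contra hq2
      exact hc (lt_of_le_of_lt (hg (not_lt.mp hq2)) hq)
    have := Finset.card_le_card hsub
    rw [Fin.card_Iio] at this
    omega

private lemma monotone_fiber {n : ℕ} {g : Fin n → ℕ} (hg : Monotone g) (k : ℕ) (p : Fin n) :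
    g p = k ↔ ((univ.filter fun q => g q < k).card ≤ (p : ℕ) ∧
      (p : ℕ) < (univ.filter fun q => g q < k + 1).card) := by
  have h1 := monotone_lt_iff hg k p
  have h2 := monotone_lt_iff hg (k + 1) p
  omega

private lemma key_sort {n ℓ : ℕ} (ω : Fin n → Option (Fin ℓ)) (i : Fin ℓ) :
    (univ.filter fun b : Fin n =>
        (∑ j ∈ univ.filter (fun j : Fin ℓ => j < i),
            (univ.filter fun b' : Fin n => ω b' = some j).card) ≤ (b : ℕ) ∧
        (b : ℕ) <
          (∑ j ∈ univ.filter (fun j : Fin ℓ => j < i),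
              (univ.filter fun b' : Fin n => ω b' = some j).card) +
            (univ.filter fun b' : Fin n => ω b' = some i).card).image
        (Tuple.sort (fun b => (ω b).elim ℓ Fin.val))
      = univ.filter fun b : Fin n => ω b = some i := by
  classical
  set f : Fin n → ℕ := fun b => (ω b).elim ℓ Fin.val with hf
  set τ : Equiv.Perm (Fin n) := Tuple.sort f with hτ
  have hg : Monotone (f ∘ τ) := Tuple.monotone_sort f
  -- fiber description
  have hfib : ∀ k : Fin ℓ, (univ.filter fun b : Fin n => f b = (k : ℕ))
      = univ.filter fun b : Fin n => ω b = some k := by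
    intro k
    ext b
    simp only [mem_filter, mem_univ, true_and, hf]
    cases h : ω b with
    | none =>
      simp only [Option.elim]
      constructor
      · intro hk; exact absurd hk.symm (Nat.ne_of_lt k.isLt)
      · intro hk; exact absurd hk (by simp)
    | some j =>
      simp only [Option.elim, Option.some.injEq]
      exact ⟨fun hjk => Fin.ext hjk, fun hjk => by rw [hjk]⟩
  have hlt : ∀ k : Fin ℓ, (univ.filter fun b : Fin n => f b < (k : ℕ))
      = (univ.filter fun j : Fin ℓ => j < k).biUnion
          (fun j => univ.filter fun b : Fin n => ω b = some j) := by
    intro k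
    ext b
    simp only [mem_filter, mem_univ, true_and, mem_biUnion, hf]
    cases h : ω b with
    | none =>
      simp only [Option.elim]
      constructor
      · intro hk; exact absurd hk (by omega)
      · rintro ⟨j, _, hj⟩; exact absurd hj (by simp)
    | some j =>
      simp only [Option.elim, Option.some.injEq]
      constructor
      · intro hk; exact ⟨j, hk, rfl⟩
      · rintro ⟨j', hj', rfl⟩; exact hj'
  have hdisjfib : ∀ j ∈ (univ.filter fun j : Fin ℓ => j < i), ∀ j' ∈ (univ.filter fun j : Fin ℓ => j < i), j ≠ j' →
      Disjoint (univ.filter fun b : Fin n => ω b = some j)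
        (univ.filter fun b : Fin n => ω b = some j') := by
    intro j _ j' _ hne
    rw [Finset.disjoint_left]
    intro b hb hb'
    simp only [mem_filter, mem_univ, true_and] at hb hb'
    rw [hb] at hb'
    exact hne (Option.some_injective _ hb')
  -- cardinalities
  have cA : (univ.filter fun q : Fin n => (f ∘ τ) q < (i : ℕ)).card
      = ∑ j ∈ univ.filter (fun j : Fin ℓ => j < i),
          (univ.filter fun b' : Fin n => ω b' = some j).card := by
    have := filt_comp_card (τ : Fin n ≃ Fin n) (fun b => f b < (i : ℕ))
    simp only [Function.comp]
    rw [this, hlt i, Finset.card_biUnion hdisjfib]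
  have csplit : (univ.filter fun b : Fin n => f b < (i : ℕ) + 1)
      = (univ.filter fun b : Fin n => f b < (i : ℕ)) ∪ (univ.filter fun b : Fin n => f b = (i : ℕ)) := by
    ext b
    simp only [mem_filter, mem_univ, true_and, mem_union]
    omega
  have cB : (univ.filter fun q : Fin n => (f ∘ τ) q < (i : ℕ) + 1).card
      = (∑ j ∈ univ.filter (fun j : Fin ℓ => j < i),
          (univ.filter fun b' : Fin n => ω b' = some j).card)
        + (univ.filter fun b' : Fin n => ω b' = some i).card := by
    have := filt_comp_card (τ : Fin n ≃ Fin n) (fun b => f b < (i : ℕ) + 1)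
    simp only [Function.comp]
    rw [this, csplit, Finset.card_union_of_disjoint, hlt i, Finset.card_biUnion hdisjfib, hfib i]
    rw [Finset.disjoint_left]
    intro b hb hb'
    simp only [mem_filter, mem_univ, true_and] at hb hb'
    omega
  -- the interval filter is the fiber of the monotone map
  have hset : (univ.filter fun b : Fin n =>
        (∑ j ∈ univ.filter (fun j : Fin ℓ => j < i),
            (univ.filter fun b' : Fin n => ω b' = some j).card) ≤ (b : ℕ) ∧
        (b : ℕ) <
          (∑ j ∈ univ.filter (fun j : Fin ℓ => j < i),
              (univ.filter fun b' : Fin n => ω b' = some j).card) +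
            (univ.filter fun b' : Fin n => ω b' = some i).card)
      = univ.filter fun q : Fin n => f (τ q) = (i : ℕ) := by
    ext q
    simp only [mem_filter, mem_univ, true_and]
    have := monotone_fiber hg (i : ℕ) q
    simp only [Function.comp] at this cA cB
    rw [cA, cB] at this
    exact ⟨fun h => this.mpr h, fun h => this.mp h⟩
  rw [hset, image_filt_comp τ (fun b => f b = (i : ℕ)), hfib i]


/-- Let `N` be a finite ground set of size `n` (here: a fintype `α`
with `Fintype.card α = n`), `ℓ ≥ 1` and `p' ∈ (0,1]` with `ℓ·p' ≤ 1`. Consider the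
random process that performs `n` independent trials (one per ball `b : Fin n`), each
discarded (`none`) with probability `1 − ℓ·p'` and otherwise landing in a uniformly
random bin `some i` (so each specific bin with probability `p'`); independently, a
uniformly random linear order `π : Fin n ≃ α` of `N` is drawn (each of the `n!` orders
has probability `1/n!`); and `R i` is the set of elements occupying positions
`(∑_{j<i} w j) + 1` through `∑_{j≤i} w j` in `π`, where `w j` is the number of balls in
bin `j`. Then for every choice of pairwise disjoint subsets `N₁, …, N_ℓ` of `N`, the
probability that `R i = N i` for all `i` equals `p'^m · (1 − ℓ·p')^(n − m)` where
`m = ∑ i |N i|` — i.e., `(R₁, …, R_ℓ)` is distributed as if each element of `N` were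
assigned independently to each bin `i` with probability `p'` (and to no bin with
probability `1 − ℓ·p'`). -/
theorem statement14 {α : Type*} [Fintype α] [DecidableEq α]
    (n : ℕ) (hn : Fintype.card α = n)
    (ℓ : ℕ) (hℓ : 1 ≤ ℓ) (p' : ℝ) (hp'0 : 0 < p') (hp'1 : p' ≤ 1)
    (hℓp' : (ℓ : ℝ) * p' ≤ 1)
    (Npart : Fin ℓ → Finset α)
    (hdisj : ∀ i j : Fin ℓ, i ≠ j → Disjoint (Npart i) (Npart j)) :
    (∑ ω : Fin n → Option (Fin ℓ), ∑ π : Fin n ≃ α,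
        ((∏ b : Fin n, if ω b = none then 1 - (ℓ : ℝ) * p' else p') *
            ((n.factorial : ℝ))⁻¹) *
          (if ∀ i : Fin ℓ,
              (Finset.univ.filter (fun b : Fin n =>
                  (∑ j ∈ Finset.univ.filter (fun j : Fin ℓ => j < i),
                      (Finset.univ.filter (fun b' : Fin n => ω b' = some j)).card)
                    ≤ (b : ℕ) ∧
                  (b : ℕ) <
                    (∑ j ∈ Finset.univ.filter (fun j : Fin ℓ => j < i),
                      (Finset.univ.filter (fun b' : Fin n => ω b' = some j)).card) +
                    (Finset.univ.filter (fun b' : Fin n => ω b' = some i)).card)).image π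
                = Npart i
            then (1 : ℝ) else 0)) =
      p' ^ (∑ i, (Npart i).card) *
        (1 - (ℓ : ℝ) * p') ^ (n - ∑ i, (Npart i).card) := by
  classical
  set m := ∑ i, (Npart i).card with hm
  -- the canonical assignment determined by σ
  set ΩS : (Fin n ≃ α) → Fin n → Option (Fin ℓ) :=
    fun σ b => if h : ∃ i, σ b ∈ Npart i then some h.choose else none with hΩS
  have hsome : ∀ (σ : Fin n ≃ α) (b : Fin n) (i : Fin ℓ),
      ΩS σ b = some i ↔ σ b ∈ Npart i := by
    intro σ b i
    by_cases h : ∃ i', σ b ∈ Npart i'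
    · simp only [hΩS, dif_pos h, Option.some.injEq]
      constructor
      · rintro rfl; exact h.choose_spec
      · intro hmem
        by_contra hne
        exact (Finset.disjoint_left.mp (hdisj _ _ hne) h.choose_spec) hmem
    · simp only [hΩS, dif_neg h]
      constructor
      · intro hc; exact absurd hc (by simp)
      · intro hmem; exact absurd ⟨i, hmem⟩ h
  have hnone : ∀ (σ : Fin n ≃ α) (b : Fin n),
      ΩS σ b = none ↔ ∀ i, σ b ∉ Npart i := by
    intro σ b
    by_cases h : ∃ i', σ b ∈ Npart i'
    · simp only [hΩS, dif_pos h]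
      constructor
      · intro hc; exact absurd hc (by simp)
      · intro hall; exact absurd h.choose_spec (hall _)
    · simp only [hΩS, dif_neg h]
      push_neg at h
      exact ⟨fun _ => h, fun _ => trivial⟩
  have cond_iff : ∀ (ω : Fin n → Option (Fin ℓ)) (σ : Fin n ≃ α),
      (∀ i, (univ.filter fun b : Fin n => ω b = some i).image σ = Npart i) ↔ ω = ΩS σ := by
    intro ω σ
    constructor
    · intro h
      funext b
      cases hb : ω b with
      | none =>
        refine ((hnone σ b).mpr ?_).symm
        intro i hi
        rw [← h i] at hi
        obtain ⟨b', hb', hbb⟩ := Finset.mem_image.mp hi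
        simp only [mem_filter, mem_univ, true_and] at hb'
        rw [σ.injective hbb] at hb'
        rw [hb] at hb'
        exact absurd hb' (by simp)
      | some i =>
        refine ((hsome σ b i).mpr ?_).symm
        rw [← h i]
        exact Finset.mem_image.mpr ⟨b, Finset.mem_filter.mpr ⟨mem_univ b, hb⟩, rfl⟩
    · rintro rfl
      intro i
      ext a
      simp only [Finset.mem_image, mem_filter, mem_univ, true_and]
      constructor
      · rintro ⟨b, hb, rfl⟩
        exact (hsome σ b i).mp hb
      · intro ha
        exact ⟨σ.symm a, (hsome σ (σ.symm a) i).mpr (by simpa using ha), by simp⟩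
  have Wcalc : ∀ σ : Fin n ≃ α,
      (∏ b : Fin n, if ΩS σ b = none then 1 - (ℓ : ℝ) * p' else p')
        = p' ^ m * (1 - (ℓ : ℝ) * p') ^ (n - m) := by
    intro σ
    set U : Finset α := Finset.univ.biUnion Npart with hU
    have hUcard : U.card = m := by
      rw [hU, Finset.card_biUnion]
      intro i _ j _ hij
      exact hdisj i j hij
    have hptw : ∀ b : Fin n,
        (if ΩS σ b = none then 1 - (ℓ : ℝ) * p' else p')
          = if σ b ∈ U then p' else 1 - (ℓ : ℝ) * p' := by
      intro b
      by_cases hb : σ b ∈ U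
      · have h1 : ΩS σ b ≠ none := by
          intro hc
          obtain ⟨i, _, hi⟩ := Finset.mem_biUnion.mp hb
          exact ((hnone σ b).mp hc i) hi
        rw [if_neg h1, if_pos hb]
      · have h1 : ΩS σ b = none :=
          (hnone σ b).mpr fun i hi => hb (Finset.mem_biUnion.mpr ⟨i, mem_univ i, hi⟩)
        rw [if_pos h1, if_neg hb]
    rw [Finset.prod_congr rfl fun b _ => hptw b, Finset.prod_ite, Finset.prod_const,
      Finset.prod_const]
    have hc1 : (univ.filter fun b : Fin n => σ b ∈ U).card = m := by
      rw [filt_comp_card σ (· ∈ U)]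
      rw [Finset.filter_univ_mem]
      exact hUcard
    have hc2 : (univ.filter fun b : Fin n => ¬ σ b ∈ U).card = n - m := by
      have htot := Finset.card_filter_add_card_filter_not
        (s := (univ : Finset (Fin n))) (p := fun b => σ b ∈ U)
      rw [Finset.card_univ, Fintype.card_fin, hc1] at htot
      omega
    rw [hc1, hc2]
  calc
    (∑ ω : Fin n → Option (Fin ℓ), ∑ π : Fin n ≃ α,
        ((∏ b : Fin n, if ω b = none then 1 - (ℓ : ℝ) * p' else p') *
            ((n.factorial : ℝ))⁻¹) *
          (if ∀ i : Fin ℓ,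
              (Finset.univ.filter (fun b : Fin n =>
                  (∑ j ∈ Finset.univ.filter (fun j : Fin ℓ => j < i),
                      (Finset.univ.filter (fun b' : Fin n => ω b' = some j)).card)
                    ≤ (b : ℕ) ∧
                  (b : ℕ) <
                    (∑ j ∈ Finset.univ.filter (fun j : Fin ℓ => j < i),
                      (Finset.univ.filter (fun b' : Fin n => ω b' = some j)).card) +
                    (Finset.univ.filter (fun b' : Fin n => ω b' = some i)).card)).image π
                = Npart i
            then (1 : ℝ) else 0))
      = ∑ ω : Fin n → Option (Fin ℓ), ∑ σ : Fin n ≃ α,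
          ((∏ b : Fin n, if ω b = none then 1 - (ℓ : ℝ) * p' else p') *
              ((n.factorial : ℝ))⁻¹) *
            (if ω = ΩS σ then (1 : ℝ) else 0) := by
        refine Finset.sum_congr rfl fun ω _ => ?_
        set τ : Equiv.Perm (Fin n) := Tuple.sort (fun b => (ω b).elim ℓ Fin.val) with hτ
        have hbij : Function.Bijective (fun σ : Fin n ≃ α => τ.trans σ) := by
          constructor
          · intro a b h
            ext x
            have h1 := congrArg (fun e : Fin n ≃ α => e (τ.symm x)) h
            simpa using h1
          · intro π
            exact ⟨(τ.symm).trans π, by ext x; simp⟩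
        rw [← Fintype.sum_bijective (fun σ : Fin n ≃ α => τ.trans σ) hbij _ _ fun _ => rfl]
        refine Finset.sum_congr rfl fun σ _ => ?_
        congr 1
        refine if_congr ?_ rfl rfl
        refine Iff.trans (forall_congr' fun i => ?_) (cond_iff ω σ)
        rw [Equiv.coe_trans, ← Finset.image_image, key_sort ω i]
    _ = ∑ σ : Fin n ≃ α, ∑ ω : Fin n → Option (Fin ℓ),
          ((∏ b : Fin n, if ω b = none then 1 - (ℓ : ℝ) * p' else p') *
              ((n.factorial : ℝ))⁻¹) *
            (if ω = ΩS σ then (1 : ℝ) else 0) := Finset.sum_comm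
    _ = ∑ σ : Fin n ≃ α,
          ((∏ b : Fin n, if ΩS σ b = none then 1 - (ℓ : ℝ) * p' else p') *
              ((n.factorial : ℝ))⁻¹) := by
        refine Finset.sum_congr rfl fun σ _ => ?_
        simp only [mul_ite, mul_one, mul_zero]
        rw [Finset.sum_ite_eq' univ (ΩS σ)
          (fun ω => (∏ b : Fin n, if ω b = none then 1 - (ℓ : ℝ) * p' else p') *
              ((n.factorial : ℝ))⁻¹), if_pos (mem_univ _)]
    _ = ∑ σ : Fin n ≃ α,
          (p' ^ m * (1 - (ℓ : ℝ) * p') ^ (n - m)) * ((n.factorial : ℝ))⁻¹ := by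
        refine Finset.sum_congr rfl fun σ _ => ?_
        rw [Wcalc σ]
    _ = p' ^ m * (1 - (ℓ : ℝ) * p') ^ (n - m) := by
        rw [Finset.sum_const, Finset.card_univ,
          Fintype.card_equiv ((Fintype.equivFinOfCardEq hn).symm), Fintype.card_fin,
          nsmul_eq_mul]
        rw [mul_comm (p' ^ m * (1 - (ℓ : ℝ) * p') ^ (n - m)), ← mul_assoc,
          mul_inv_cancel₀ (Nat.cast_ne_zero.mpr (Nat.factorial_ne_zero n)), one_mul]
end

section
/- Let r and p be real numbers with 0 < p < r, let h ∈ (0,1], and let ℓ ≥ 1 be an integer. For each integer i ≥ 0, set h_i = h·(1 + p/(r − p))^i and, for i ≥ 1, Δh_i = h_i − h_{i−1}. Assume h_ℓ ≤ 1. Then Δh_i = h_i·(p/r) for every i, and ∏_{i=1}^ℓ (1 + Δh_i)^{-1} ≤ exp(h − h_{ℓ−1}). -/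
private lemma exp_key (c x : ℝ) (hc0 : 0 < c) (hc1 : c < 1) (hx0 : 0 < x)
    (hxc : x ≤ c) : Real.exp (x * (1 - c)) ≤ 1 + x := by
  have hy0 : 0 ≤ x * (1 - c) := by nlinarith
  have hy1 : x * (1 - c) < 1 := by nlinarith
  have hpos : (0:ℝ) < 1 - x * (1 - c) := by linarith
  have h1 : 1 - x * (1 - c) ≤ Real.exp (-(x * (1 - c))) := by
    have := Real.add_one_le_exp (-(x * (1 - c))); linarith
  have h2 : Real.exp (x * (1 - c)) ≤ (1 - x * (1 - c))⁻¹ := by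
    calc Real.exp (x * (1 - c)) = (Real.exp (-(x * (1 - c))))⁻¹ := by
          rw [Real.exp_neg, inv_inv]
      _ ≤ (1 - x * (1 - c))⁻¹ := inv_anti₀ hpos h1
  have haux : 0 ≤ c - x * (1 - c) := by nlinarith
  have h3 : (1 - x * (1 - c))⁻¹ ≤ 1 + x := by
    rw [inv_le_iff_one_le_mul₀ hpos]
    nlinarith [mul_nonneg hx0.le haux]
  linarith

/-- Let `0 < p < r` be reals, `h ∈ (0,1]`, and `ℓ ≥ 1` an integer.
For `i ≥ 0`, set `hs i = h·(1 + p/(r − p))^i` (so `hs 0 = h`) and, for `i ≥ 1`,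
`Δh i = hs i − hs (i−1)`. Assume `hs ℓ ≤ 1`. Then `Δh i = hs i · (p/r)` for every
`i ≥ 1`, and `(∏_{i=1}^ℓ (1 + Δh i))⁻¹ ≤ exp (h − hs (ℓ−1))`. -/
theorem statement15 (r p h : ℝ) (hp : 0 < p) (hpr : p < r)
    (hh0 : 0 < h) (hh1 : h ≤ 1)
    (ℓ : ℕ) (hℓ : 1 ≤ ℓ)
    (hs : ℕ → ℝ) (hhs : ∀ i : ℕ, hs i = h * (1 + p / (r - p)) ^ i)
    (hsℓ : hs ℓ ≤ 1) :
    (∀ i : ℕ, 1 ≤ i → hs i - hs (i - 1) = hs i * (p / r)) ∧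
    (∏ i ∈ Finset.Icc 1 ℓ, (1 + (hs i - hs (i - 1))))⁻¹ ≤
      Real.exp (h - hs (ℓ - 1)) := by
  have hr : 0 < r := hp.trans hpr
  have hrp : 0 < r - p := by linarith
  have hb1 : (1:ℝ) ≤ 1 + p / (r - p) := by
    have : 0 < p / (r - p) := by positivity
    linarith
  have key : ∀ i : ℕ, 1 ≤ i → hs i - hs (i - 1) = hs i * (p / r) := by
    intro i hi
    obtain ⟨k, rfl⟩ : ∃ k, i = k + 1 := ⟨i - 1, (Nat.succ_pred_eq_of_pos hi).symm⟩
    simp only [hhs, Nat.add_sub_cancel, pow_succ]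
    field_simp
    ring
  refine ⟨key, ?_⟩
  have hspos : ∀ i : ℕ, 0 < hs i := by
    intro i; rw [hhs]; positivity
  have hsmono : ∀ i j : ℕ, i ≤ j → hs i ≤ hs j := by
    intro i j hij
    rw [hhs, hhs]
    exact mul_le_mul_of_nonneg_left (pow_le_pow_right₀ hb1 hij) hh0.le
  have hc0 : 0 < p / r := by positivity
  have hc1 : p / r < 1 := (div_lt_one hr).mpr hpr
  have step : ∀ n : ℕ, 1 ≤ n → n + 1 ≤ ℓ →
      Real.exp (hs n - hs (n - 1)) ≤ 1 + (hs (n + 1) - hs (n + 1 - 1)) := by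
    intro n hn hnℓ
    rw [key n hn, key (n + 1) (by omega)]
    have hx0 : 0 < hs (n + 1) * (p / r) := mul_pos (hspos _) hc0
    have hxc : hs (n + 1) * (p / r) ≤ p / r := by
      have := (hsmono (n + 1) ℓ hnℓ).trans hsℓ
      nlinarith [hspos (n + 1)]
    have hyx : hs n * (p / r) = (hs (n + 1) * (p / r)) * (1 - p / r) := by
      have h3 := key (n + 1) (by omega)
      simp only [Nat.add_sub_cancel] at h3
      have : hs n = hs (n + 1) * (1 - p / r) := by linarith
      rw [this]; ring
    rw [hyx]
    exact exp_key (p / r) (hs (n + 1) * (p / r)) hc0 hc1 hx0 hxc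
  have main : ∀ n : ℕ, 1 ≤ n → n ≤ ℓ →
      Real.exp (hs (n - 1) - hs 0) ≤ ∏ i ∈ Finset.Icc 1 n, (1 + (hs i - hs (i - 1))) := by
    intro n
    induction n with
    | zero => omega
    | succ m ih =>
      intro _ hmℓ
      rcases Nat.eq_zero_or_pos m with hm | hm1
      · subst hm
        rw [show (0:ℕ) + 1 = 1 from rfl, Finset.Icc_self, Finset.prod_singleton]
        norm_num
        exact hsmono 0 1 (by omega)
      · rw [Finset.prod_Icc_succ_top (by omega : 1 ≤ m + 1)]
        have hstep := step m hm1 hmℓ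
        have hih := ih hm1 (by omega)
        have heq : hs (m + 1 - 1) - hs 0 = (hs (m - 1) - hs 0) + (hs m - hs (m - 1)) := by
          simp only [Nat.add_sub_cancel]; ring
        rw [heq, Real.exp_add]
        exact mul_le_mul hih hstep (Real.exp_pos _).le (le_trans (Real.exp_pos _).le hih)
  have hmain := main ℓ hℓ le_rfl
  have hs0 : hs 0 = h := by rw [hhs]; simp
  have hfin := inv_anti₀ (Real.exp_pos (hs (ℓ - 1) - hs 0)) hmain
  rwa [← Real.exp_neg, neg_sub, hs0] at hfin
end
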